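/- arXiv:1901.01909 — 9 statements merged into one kernel-verified Lean document; each statement's English description precedes it below -/
import Mathlib

section
/- For every θ in a neighborhood of 0 (precisely, for every θ ∈ (−π/2, π/2) such that cos θ − α_i sin θ > 0 for all i ∈ {1,…,N+1}), the function s ↦ f(ℓ_θ(s)) is integrable on ℝ, the X-ray data If(θ) = ∫_ℝ f(ℓ_θ(s)) ds is well defined, and If(θ) = (1/cos²θ) · Σ_{i=1}^{N} a_i (z_i^{tan θ} − z_{i+1}^{tan θ}). In particular If is C^∞ on this neighborhood of 0. -/
open Real MeasureTheory


noncomputable def sfun (α θ : ℝ) : ℝ :=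
  (Real.sin θ + α * Real.cos θ) / (Real.cos θ - α * Real.sin θ)

lemma lt_sfun_iff {α θ s : ℝ} (hD : 0 < Real.cos θ - α * Real.sin θ) :
    s < sfun α θ ↔ -Real.sin θ + s * Real.cos θ < α * (Real.cos θ + s * Real.sin θ) := by
  rw [sfun, lt_div_iff₀ hD]
  constructor <;> intro h <;> nlinarith

lemma sfun_lt_iff {α θ s : ℝ} (hD : 0 < Real.cos θ - α * Real.sin θ) :
    sfun α θ < s ↔ α * (Real.cos θ + s * Real.sin θ) < -Real.sin θ + s * Real.cos θ := by
  rw [sfun, div_lt_iff₀ hD]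
  constructor <;> intro h <;> nlinarith

lemma sfun_lt_sfun {θ α β : ℝ} (hDα : 0 < Real.cos θ - α * Real.sin θ)
    (hDβ : 0 < Real.cos θ - β * Real.sin θ) (hαβ : α < β) : sfun α θ < sfun β θ := by
  rw [sfun, sfun, div_lt_div_iff₀ hDα hDβ]
  nlinarith [Real.sin_sq_add_cos_sq θ]

lemma sfun_eq {α θ : ℝ} (hc : Real.cos θ ≠ 0) (hD : Real.cos θ - α * Real.sin θ ≠ 0) :
    sfun α θ = Real.sin θ / Real.cos θ
      + α / (1 - α * (Real.sin θ / Real.cos θ)) / Real.cos θ ^ 2 := by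
  have h1 : 1 - α * (Real.sin θ / Real.cos θ) = (Real.cos θ - α * Real.sin θ) / Real.cos θ := by
    field_simp
  rw [sfun, h1]
  have hD' : Real.cos θ - Real.sin θ * α ≠ 0 := by rwa [mul_comm]
  field_simp
  linear_combination α * Real.sin_sq_add_cos_sq θ

/-- For every θ ∈ (−π/2, π/2) with cos θ − α_i sin θ > 0 for all i,
the function s ↦ f(ℓ_θ(s)) is integrable, the X-ray data If(θ) is well defined and
equals (1/cos²θ) Σ a_i (z_i^{tan θ} − z_{i+1}^{tan θ}); moreover If is C^∞ on this
neighborhood of 0. -/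
theorem stmt_0 (N : ℕ) (hN : 1 ≤ N) (α : Fin (N + 1) → ℝ) (hα : StrictAnti α)
    (a : Fin N → ℝ) (f : ℝ × ℝ → ℝ)
    (hf1 : ∀ i : Fin N, ∀ x y : ℝ,
      0 < y → α i.succ * y < x → x < α i.castSucc * y → f (x, y) = a i)
    (hf0 : ∀ x y : ℝ,
      (¬ ∃ i : Fin N, 0 < y ∧ α i.succ * y < x ∧ x < α i.castSucc * y) → f (x, y) = 0) :
    (∀ θ : ℝ, -(π / 2) < θ → θ < π / 2 → (∀ i : Fin (N + 1), 0 < cos θ - α i * sin θ) →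
      Integrable (fun s : ℝ => f (-sin θ + s * cos θ, cos θ + s * sin θ)) ∧
      (∫ s : ℝ, f (-sin θ + s * cos θ, cos θ + s * sin θ)) =
        (1 / cos θ ^ 2) * ∑ i : Fin N, a i *
          (α i.castSucc / (1 - α i.castSucc * tan θ) - α i.succ / (1 - α i.succ * tan θ))) ∧
    ContDiffOn ℝ (⊤ : ℕ∞) (fun θ : ℝ => ∫ s : ℝ, f (-sin θ + s * cos θ, cos θ + s * sin θ))
      {θ : ℝ | -(π / 2) < θ ∧ θ < π / 2 ∧ ∀ i : Fin (N + 1), 0 < cos θ - α i * sin θ} := by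
  -- main step: integrability and the raw integral formula
  have main : ∀ θ : ℝ, -(π / 2) < θ → θ < π / 2 →
      (∀ i : Fin (N + 1), 0 < cos θ - α i * sin θ) →
      Integrable (fun s : ℝ => f (-sin θ + s * cos θ, cos θ + s * sin θ)) ∧
      (∫ s : ℝ, f (-sin θ + s * cos θ, cos θ + s * sin θ)) =
        ∑ i : Fin N, (sfun (α i.castSucc) θ - sfun (α i.succ) θ) * a i := by
    intro θ hθ1 hθ2 hD
    set t : Fin (N + 1) → ℝ := fun j => sfun (α j) θ with ht_def
    have ht : StrictAnti t := fun j k h => sfun_lt_sfun (hD k) (hD j) (hα h)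
    have hlt : ∀ i : Fin N, t i.succ < t i.castSucc :=
      fun i => ht (Fin.castSucc_lt_succ (i := i))
    -- pointwise description of the integrand
    have hpt : ∀ s : ℝ, f (-sin θ + s * cos θ, cos θ + s * sin θ) =
        ∑ i : Fin N, (Set.Ioo (t i.succ) (t i.castSucc)).indicator (fun _ => a i) s := by
      intro s
      by_cases h : ∃ i : Fin N, s ∈ Set.Ioo (t i.succ) (t i.castSucc)
      · obtain ⟨i, hi⟩ := h
        have h1 : α i.succ * (cos θ + s * sin θ) < -sin θ + s * cos θ :=
          (sfun_lt_iff (hD i.succ)).1 hi.1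
        have h2 : -sin θ + s * cos θ < α i.castSucc * (cos θ + s * sin θ) :=
          (lt_sfun_iff (hD i.castSucc)).1 hi.2
        have hy : 0 < cos θ + s * sin θ := by
          have hαi : α i.succ < α i.castSucc := hα (Fin.castSucc_lt_succ (i := i))
          nlinarith
        rw [hf1 i _ _ hy h1 h2]
        rw [Finset.sum_eq_single_of_mem i (Finset.mem_univ i)]
        · exact (Set.indicator_of_mem hi (fun _ => a i)).symm
        · intro j _ hj
          apply Set.indicator_of_notMem
          intro hjs
          apply hj
          have h3 : t i.succ < t j.castSucc := lt_trans hi.1 hjs.2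
          have h4 : t j.succ < t i.castSucc := lt_trans hjs.1 hi.2
          have h5 : j.castSucc < i.succ := ht.lt_iff_gt.1 h3
          have h6 : i.castSucc < j.succ := ht.lt_iff_gt.1 h4
          exact le_antisymm (Fin.castSucc_lt_succ_iff.1 h5) (Fin.castSucc_lt_succ_iff.1 h6)
      · rw [hf0]
        · symm
          apply Finset.sum_eq_zero
          intro j _
          exact Set.indicator_of_notMem (fun hjs => h ⟨j, hjs⟩) _
        · rintro ⟨i, hy, h1, h2⟩
          exact h ⟨i, (sfun_lt_iff (hD i.succ)).2 h1, (lt_sfun_iff (hD i.castSucc)).2 h2⟩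
    have hfun : (fun s : ℝ => f (-sin θ + s * cos θ, cos θ + s * sin θ)) =
        fun s : ℝ => ∑ i : Fin N, (Set.Ioo (t i.succ) (t i.castSucc)).indicator (fun _ => a i) s :=
      funext hpt
    have hint : ∀ i : Fin N,
        Integrable (fun s : ℝ => (Set.Ioo (t i.succ) (t i.castSucc)).indicator (fun _ => a i) s) := by
      intro i
      rw [integrable_indicator_iff measurableSet_Ioo]
      exact integrableOn_const measure_Ioo_lt_top.ne
    constructor
    · rw [hfun]
      exact integrable_finset_sum _ (fun i _ => hint i)
    · rw [hfun, integral_finset_sum _ (fun i _ => hint i)]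
      apply Finset.sum_congr rfl
      intro i _
      rw [integral_indicator_const (a i) measurableSet_Ioo, Real.volume_real_Ioo_of_le (hlt i).le, smul_eq_mul]
  refine ⟨fun θ hθ1 hθ2 hD => ⟨(main θ hθ1 hθ2 hD).1, ?_⟩, ?_⟩
  · rw [(main θ hθ1 hθ2 hD).2, Finset.mul_sum]
    apply Finset.sum_congr rfl
    intro i _
    have hc : cos θ ≠ 0 := (Real.cos_pos_of_mem_Ioo ⟨hθ1, hθ2⟩).ne'
    rw [Real.tan_eq_sin_div_cos, sfun_eq hc (hD i.castSucc).ne', sfun_eq hc (hD i.succ).ne']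
    ring
  · have hsfun : ∀ j : Fin (N + 1), ContDiffOn ℝ (⊤ : ℕ∞) (fun θ => sfun (α j) θ)
        {θ : ℝ | -(π / 2) < θ ∧ θ < π / 2 ∧ ∀ i : Fin (N + 1), 0 < cos θ - α i * sin θ} := by
      intro j
      apply ContDiffOn.div
      · exact (Real.contDiff_sin.add (contDiff_const.mul Real.contDiff_cos)).contDiffOn
      · exact (Real.contDiff_cos.sub (contDiff_const.mul Real.contDiff_sin)).contDiffOn
      · intro θ hθ; exact (hθ.2.2 j).ne'
    have hG : ContDiffOn ℝ (⊤ : ℕ∞)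
        (fun θ : ℝ => ∑ i : Fin N, (sfun (α i.castSucc) θ - sfun (α i.succ) θ) * a i)
        {θ : ℝ | -(π / 2) < θ ∧ θ < π / 2 ∧ ∀ i : Fin (N + 1), 0 < cos θ - α i * sin θ} :=
      ContDiffOn.sum (fun i _ => ((hsfun _).sub (hsfun _)).mul contDiffOn_const)
    exact hG.congr (fun θ hθ => (main θ hθ.1 hθ.2.1 hθ.2.2).2)
end

section
/- Let N ≥ 1 and let α₁ > α₂ > … > α_{N+1} be real numbers. Then the N×N real matrix A with entries A_{k,i} = α_i^k − α_{i+1}^k (for 1 ≤ k, i ≤ N) is invertible. -/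
/-!
Subtracting from each row of the Vandermonde matrix of `α₁, …, α_{N+1}` the row before it
leaves `(1, 0, …, 0)` as the first column, so the Vandermonde determinant equals the
`N × N` determinant of the consecutive differences `α_{i+1}^k − α_i^k`, which is `± det A`.
It is nonzero because the `αᵢ` are distinct.
-/

namespace Matrix

variable {R : Type*} [CommRing R] {n : ℕ}

theorem det_vandermonde_eq_det_succ_sub_castSucc (α : Fin (n + 1) → R) :
    (vandermonde α).det =
      (of fun i k : Fin n => α i.succ ^ ((k : ℕ) + 1) - α i.castSucc ^ ((k : ℕ) + 1)).det := by
  let B : Matrix (Fin (n + 1)) (Fin (n + 1)) R :=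
    of (Fin.cons (vandermonde α 0) fun i k => α i.succ ^ (k : ℕ) - α i.castSucc ^ (k : ℕ))
  have hrows : (vandermonde α).det = B.det :=
    det_eq_of_forall_row_eq_smul_add_pred (fun _ => 1) (fun _ => rfl)
      (fun i k => by simp [B, vandermonde_apply])
  rw [hrows, det_succ_column_zero, Fin.sum_univ_succ, Finset.sum_eq_zero fun i _ => by simp [B]]
  simp [B, vandermonde_apply, submatrix]

theorem det_castSucc_sub_succ_pow (α : Fin (n + 1) → R) :
    (of fun k i : Fin n => α i.castSucc ^ ((k : ℕ) + 1) - α i.succ ^ ((k : ℕ) + 1)).det =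
      (-1) ^ n * (vandermonde α).det := by
  have hneg : (of fun k i : Fin n => α i.castSucc ^ ((k : ℕ) + 1) - α i.succ ^ ((k : ℕ) + 1)) =
      -(of fun i k : Fin n => α i.succ ^ ((k : ℕ) + 1) - α i.castSucc ^ ((k : ℕ) + 1))ᵀ := by
    ext k i
    simp
  rw [hneg, det_neg, det_transpose, det_vandermonde_eq_det_succ_sub_castSucc, Fintype.card_fin]

end Matrix

theorem stmt_1_general (N : ℕ) (α : Fin (N + 1) → ℝ) (hα : StrictAnti α) :
    IsUnit (Matrix.of fun k i : Fin N =>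
      α i.castSucc ^ ((k : ℕ) + 1) - α i.succ ^ ((k : ℕ) + 1)) := by
  rw [Matrix.isUnit_iff_isUnit_det, Matrix.det_castSucc_sub_succ_pow, isUnit_iff_ne_zero]
  exact mul_ne_zero (pow_ne_zero _ (by norm_num))
    (Matrix.det_vandermonde_ne_zero_iff.mpr hα.injective)

/-- For N ≥ 1 and reals α₁ > α₂ > … > α_{N+1}, the N×N matrix with
entries A_{k,i} = α_i^k − α_{i+1}^k (1 ≤ k, i ≤ N) is invertible. -/
theorem stmt_1 (N : ℕ) (hN : 1 ≤ N) (α : Fin (N + 1) → ℝ) (hα : StrictAnti α) :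
    IsUnit (Matrix.of fun k i : Fin N =>
      α i.castSucc ^ ((k : ℕ) + 1) - α i.succ ^ ((k : ℕ) + 1)) :=
  stmt_1_general N α hα
end

section
/- Let δ > 0 be such that cos θ − α_i sin θ > 0 for all i and all |θ| < arctan δ, and define F(t) = cos²(arctan t) · If(arctan t) for |t| < δ. Then F is C^∞, and for every k ∈ {1,…,N} one has Σ_{i=1}^{N} (α_i^k − α_{i+1}^k) a_i = F^{(k−1)}(0)/(k−1)!. Consequently, since the matrix A with entries A_{k,i} = α_i^k − α_{i+1}^k is invertible, the vector of values (a₁,…,a_N) equals A^{-1} applied to the vector (F(0), F'(0)/1!, …, F^{(N−1)}(0)/(N−1)!); in particular the values a₁,…,a_N are determined by the value and the first N−1 derivatives of If at θ = 0. -/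
open Real MeasureTheory

lemma aux_det_ne_zero {N : ℕ} (α : Fin (N+1) → ℝ) (hα : Function.Injective α) :
    (Matrix.of fun k i : Fin N =>
      α i.castSucc ^ ((k:ℕ)+1) - α i.succ ^ ((k:ℕ)+1)).det ≠ 0 := by
  set A : Matrix (Fin N) (Fin N) ℝ := Matrix.of fun k i : Fin N =>
      α i.castSucc ^ ((k:ℕ)+1) - α i.succ ^ ((k:ℕ)+1) with hA
  rw [← Matrix.det_transpose]
  intro hdet
  obtain ⟨v, hv, hmul⟩ := Matrix.exists_mulVec_eq_zero_iff.mpr hdet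
  apply hv
  set p : Polynomial ℝ :=
    ∑ k : Fin N, Polynomial.C (v k) * Polynomial.X ^ ((k:ℕ)+1) with hp
  have hdeg : p.natDegree < N + 1 := by
    apply Nat.lt_succ_of_le
    exact Polynomial.natDegree_sum_le_of_forall_le _ _ fun k _ =>
      (Polynomial.natDegree_C_mul_X_pow_le _ _).trans (Nat.succ_le_of_lt k.isLt)
  have heval : ∀ i : Fin N, p.eval (α i.castSucc) = p.eval (α i.succ) := by
    intro i
    have h0 := congrFun hmul i
    simp only [Matrix.mulVec, Matrix.transpose_apply, dotProduct, hA, Matrix.of_apply,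
      Pi.zero_apply] at h0
    have h1 : ∑ k : Fin N, (v k * α i.castSucc ^ ((k:ℕ)+1)
        - v k * α i.succ ^ ((k:ℕ)+1)) = 0 := by
      rw [← h0]; apply Finset.sum_congr rfl; intro k _; ring
    rw [Finset.sum_sub_distrib] at h1
    have h2 := sub_eq_zero.mp h1
    simp [hp, Polynomial.eval_finset_sum, h2]
  have hall : ∀ j : Fin (N+1), p.eval (α j) = p.eval (α 0) := by
    intro j
    induction j using Fin.induction with
    | zero => rfl
    | succ i ih => rw [← heval i]; exact ih
  have hq : p - Polynomial.C (p.eval (α 0)) = 0 := by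
    apply Polynomial.eq_zero_of_natDegree_lt_card_of_eval_eq_zero _ hα
    · intro j; simp [hall j]
    · refine lt_of_le_of_lt (Polynomial.natDegree_sub_le _ _) ?_
      simpa using hdeg
  funext k
  have hc := congrArg (fun q => Polynomial.coeff q ((k:ℕ)+1)) hq
  simp only [hp, Polynomial.coeff_sub, Polynomial.finset_sum_coeff,
    Polynomial.coeff_C_mul, Polynomial.coeff_X_pow, Polynomial.coeff_C,
    Polynomial.coeff_zero] at hc
  rw [Finset.sum_eq_single k] at hc
  · simpa using hc
  · intro j _ hjk
    have hne : ((k:ℕ)+1 ≠ (j:ℕ)+1) := by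
      simpa using fun h => hjk (Fin.val_injective h).symm
    simp [hne]
    intro h; exact absurd (Fin.val_injective h).symm hjk
  · simp

lemma aux_lt (θ β s : ℝ) (hβ : 0 < Real.cos θ - β * Real.sin θ) :
    (-Real.sin θ + s * Real.cos θ < β * (Real.cos θ + s * Real.sin θ)) ↔
      s < (Real.sin θ + β * Real.cos θ) / (Real.cos θ - β * Real.sin θ) := by
  rw [lt_div_iff₀ hβ]
  constructor <;> intro h <;> nlinarith

lemma aux_gt (θ β s : ℝ) (hβ : 0 < Real.cos θ - β * Real.sin θ) :
    (β * (Real.cos θ + s * Real.sin θ) < -Real.sin θ + s * Real.cos θ) ↔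
      (Real.sin θ + β * Real.cos θ) / (Real.cos θ - β * Real.sin θ) < s := by
  rw [div_lt_iff₀ hβ]
  constructor <;> intro h <;> nlinarith

lemma aux_gmono (θ β γ : ℝ) (hβ : 0 < Real.cos θ - β * Real.sin θ)
    (hγ : 0 < Real.cos θ - γ * Real.sin θ) (hlt : γ < β) :
    (Real.sin θ + γ * Real.cos θ) / (Real.cos θ - γ * Real.sin θ) <
      (Real.sin θ + β * Real.cos θ) / (Real.cos θ - β * Real.sin θ) := by
  rw [div_lt_div_iff₀ hγ hβ]
  nlinarith [Real.sin_sq_add_cos_sq θ]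

lemma aux_ypos (θ β γ s : ℝ) (hβ : 0 < Real.cos θ - β * Real.sin θ)
    (hγ : 0 < Real.cos θ - γ * Real.sin θ)
    (h1 : (Real.sin θ + γ * Real.cos θ) / (Real.cos θ - γ * Real.sin θ) < s)
    (h2 : s < (Real.sin θ + β * Real.cos θ) / (Real.cos θ - β * Real.sin θ)) :
    0 < Real.cos θ + s * Real.sin θ := by
  rw [div_lt_iff₀ hγ] at h1
  rw [lt_div_iff₀ hβ] at h2
  rcases le_or_gt 0 (Real.sin θ) with hs | hs
  · nlinarith [Real.sin_sq_add_cos_sq θ, mul_le_mul_of_nonneg_left h1.le hs]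
  · nlinarith [Real.sin_sq_add_cos_sq θ, mul_le_mul_of_nonpos_left h2.le hs.le]

lemma aux_integral {N : ℕ} (α : Fin (N+1) → ℝ) (hα : StrictAnti α)
    (a : Fin N → ℝ) (f : ℝ × ℝ → ℝ)
    (hf1 : ∀ i : Fin N, ∀ x y : ℝ,
      0 < y → α i.succ * y < x → x < α i.castSucc * y → f (x, y) = a i)
    (hf0 : ∀ x y : ℝ,
      (¬ ∃ i : Fin N, 0 < y ∧ α i.succ * y < x ∧ x < α i.castSucc * y) → f (x, y) = 0)
    (θ : ℝ) (hc : ∀ j : Fin (N+1), 0 < Real.cos θ - α j * Real.sin θ) :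
    ∫ s : ℝ, f (-Real.sin θ + s * Real.cos θ, Real.cos θ + s * Real.sin θ) =
      ∑ i : Fin N, a i *
        ((Real.sin θ + α i.castSucc * Real.cos θ) / (Real.cos θ - α i.castSucc * Real.sin θ)
          - (Real.sin θ + α i.succ * Real.cos θ) / (Real.cos θ - α i.succ * Real.sin θ)) := by
  set g : Fin (N+1) → ℝ :=
    fun j => (Real.sin θ + α j * Real.cos θ) / (Real.cos θ - α j * Real.sin θ) with hgdef
  have hg : StrictAnti g := fun j j' h => aux_gmono θ (α j) (α j') (hc j) (hc j') (hα h)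
  have hiff : ∀ (i : Fin N) (s : ℝ),
      (0 < Real.cos θ + s * Real.sin θ ∧
        α i.succ * (Real.cos θ + s * Real.sin θ) < -Real.sin θ + s * Real.cos θ ∧
        -Real.sin θ + s * Real.cos θ < α i.castSucc * (Real.cos θ + s * Real.sin θ)) ↔
      s ∈ Set.Ioo (g i.succ) (g i.castSucc) := by
    intro i s
    constructor
    · rintro ⟨hy, h1, h2⟩
      exact ⟨(aux_gt θ _ s (hc i.succ)).mp h1, (aux_lt θ _ s (hc i.castSucc)).mp h2⟩
    · rintro ⟨h1, h2⟩
      exact ⟨aux_ypos θ _ _ s (hc i.castSucc) (hc i.succ) h1 h2,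
        (aux_gt θ _ s (hc i.succ)).mpr h1, (aux_lt θ _ s (hc i.castSucc)).mpr h2⟩
  have hfun : ∀ s : ℝ, f (-Real.sin θ + s * Real.cos θ, Real.cos θ + s * Real.sin θ) =
      ∑ i : Fin N, Set.indicator (Set.Ioo (g i.succ) (g i.castSucc)) (fun _ => a i) s := by
    intro s
    by_cases hs : ∃ i : Fin N, s ∈ Set.Ioo (g i.succ) (g i.castSucc)
    · obtain ⟨i, hi⟩ := hs
      obtain ⟨hy, h1, h2⟩ := (hiff i s).mpr hi
      rw [hf1 i _ _ hy h1 h2, Finset.sum_eq_single i]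
      · simp [Set.indicator_of_mem hi]
      · intro j _ hj
        apply Set.indicator_of_notMem
        intro hmem
        rcases lt_or_gt_of_ne hj with h | h
        · have hle : (j.succ : Fin (N+1)) ≤ i.castSucc := by
            rw [Fin.le_def]; simp only [Fin.val_succ, Fin.coe_castSucc]
            exact Nat.succ_le_of_lt h
          have := hg.antitone hle
          have := hmem.1; have := hi.2
          linarith
        · have hle : (i.succ : Fin (N+1)) ≤ j.castSucc := by
            rw [Fin.le_def]; simp only [Fin.val_succ, Fin.coe_castSucc]
            exact Nat.succ_le_of_lt h
          have := hg.antitone hle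
          have := hmem.2; have := hi.1
          linarith
      · simp
    · rw [hf0]
      · symm; apply Finset.sum_eq_zero; intro i _
        exact Set.indicator_of_notMem (fun h => hs ⟨i, h⟩) _
      · rintro ⟨i, hy, h1, h2⟩
        exact hs ⟨i, (hiff i s).mp ⟨hy, h1, h2⟩⟩
  simp only [hfun]
  rw [MeasureTheory.integral_finset_sum _ (fun i _ =>
    (integrable_indicator_iff measurableSet_Ioo).mpr
      (integrableOn_const measure_Ioo_lt_top.ne))]
  apply Finset.sum_congr rfl
  intro i _
  rw [MeasureTheory.integral_indicator_const _ measurableSet_Ioo]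
  have hlt : g i.succ ≤ g i.castSucc := (hg (Fin.castSucc_lt_succ (i := i))).le
  rw [Real.volume_real_Ioo_of_le hlt]
  simp [hgdef, mul_comm]

lemma aux_sin_arctan (t : ℝ) : Real.sin (Real.arctan t) = t * Real.cos (Real.arctan t) := by
  have hc : Real.cos (Real.arctan t) ≠ 0 := (Real.cos_arctan_pos t).ne'
  have := Real.tan_arctan t
  rw [Real.tan_eq_sin_div_cos] at this
  field_simp at this
  linarith [this]

lemma aux_cos_sq_g (t β : ℝ) (hβ : 0 < Real.cos (Real.arctan t) - β * Real.sin (Real.arctan t)) :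
    Real.cos (Real.arctan t) ^ 2 *
      ((Real.sin (Real.arctan t) + β * Real.cos (Real.arctan t)) /
        (Real.cos (Real.arctan t) - β * Real.sin (Real.arctan t)))
    = β / (1 - β * t) + t * Real.cos (Real.arctan t) ^ 2 := by
  set c := Real.cos (Real.arctan t) with hcdef
  set s := Real.sin (Real.arctan t) with hsdef
  have hc : 0 < c := Real.cos_arctan_pos t
  have hs : s = t * c := aux_sin_arctan t
  have hc2 : c ^ 2 * (1 + t ^ 2) = 1 := by
    rw [hcdef, Real.cos_sq_arctan]
    field_simp
  have h1 : (0:ℝ) < 1 - β * t := by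
    rw [hs] at hβ
    nlinarith
  rw [hs] at hβ ⊢
  have hne : c - β * (t * c) ≠ 0 := hβ.ne'
  have hne2 : 1 - β * t ≠ 0 := h1.ne'
  field_simp
  have hne3 : 1 - t * β ≠ 0 := by rw [mul_comm]; exact hne2
  rw [div_add' _ _ _ hne3, div_left_inj' hne3]
  linear_combination β * hc2

lemma aux_hasDerivAt (β : ℝ) (k : ℕ) (t : ℝ) (h : 1 - β * t ≠ 0) :
    HasDerivAt (fun u => β ^ (k+1) / (1 - β * u) ^ (k+1))
      (((k:ℝ)+1) * β ^ (k+2) / (1 - β * t) ^ (k+2)) t := by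
  have hu : HasDerivAt (fun u : ℝ => 1 - β * u) (-β) t := by
    simpa using ((hasDerivAt_id t).const_mul β).const_sub 1
  have hupow := hu.fun_pow (k+1)
  have hd := (hasDerivAt_const t (β^(k+1))).fun_div hupow (pow_ne_zero _ h)
  refine hd.congr_deriv ?_
  simp only [Nat.add_sub_cancel]
  field_simp
  push_cast
  ring

lemma aux_iter {N : ℕ} (α : Fin (N+1) → ℝ) (a : Fin N → ℝ) (k : ℕ) (t : ℝ)
    (h : ∀ j : Fin (N+1), 1 - α j * t ≠ 0) :
    iteratedDeriv k (fun u => ∑ i : Fin N, a i *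
        (α i.castSucc / (1 - α i.castSucc * u) - α i.succ / (1 - α i.succ * u))) t
    = ∑ i : Fin N, a i * ((k.factorial : ℝ) *
        (α i.castSucc ^ (k+1) / (1 - α i.castSucc * t) ^ (k+1)
          - α i.succ ^ (k+1) / (1 - α i.succ * t) ^ (k+1))) := by
  have hUopen : IsOpen {u : ℝ | ∀ j : Fin (N+1), 1 - α j * u ≠ 0} := by
    have : {u : ℝ | ∀ j : Fin (N+1), 1 - α j * u ≠ 0}
        = ⋂ j : Fin (N+1), (fun u => 1 - α j * u) ⁻¹' ({0}ᶜ) := by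
      ext u; simp [Set.mem_iInter]
    rw [this]
    exact isOpen_iInter_of_finite fun j =>
      (isOpen_compl_singleton).preimage (by continuity)
  induction k generalizing t with
  | zero => simp
  | succ k ih =>
    rw [iteratedDeriv_succ]
    have hev : iteratedDeriv k (fun u => ∑ i : Fin N, a i *
        (α i.castSucc / (1 - α i.castSucc * u) - α i.succ / (1 - α i.succ * u)))
        =ᶠ[nhds t] fun u => ∑ i : Fin N, a i * ((k.factorial : ℝ) *
        (α i.castSucc ^ (k+1) / (1 - α i.castSucc * u) ^ (k+1)
          - α i.succ ^ (k+1) / (1 - α i.succ * u) ^ (k+1))) := by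
      filter_upwards [hUopen.mem_nhds h] with u hu using ih u hu
    rw [hev.deriv_eq]
    have hd : HasDerivAt (fun u => ∑ i : Fin N, a i * ((k.factorial : ℝ) *
        (α i.castSucc ^ (k+1) / (1 - α i.castSucc * u) ^ (k+1)
          - α i.succ ^ (k+1) / (1 - α i.succ * u) ^ (k+1))))
        (∑ i : Fin N, a i * ((k.factorial : ℝ) *
          ((((k:ℝ)+1) * α i.castSucc ^ (k+2) / (1 - α i.castSucc * t) ^ (k+2))
            - (((k:ℝ)+1) * α i.succ ^ (k+2) / (1 - α i.succ * t) ^ (k+2))))) t := by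
      refine HasDerivAt.fun_sum fun i _ => ?_
      exact (((aux_hasDerivAt (α i.castSucc) k t (h _)).sub
        (aux_hasDerivAt (α i.succ) k t (h _))).const_mul
          ((k.factorial : ℝ))).const_mul (a i)
    rw [hd.deriv]
    refine Finset.sum_congr rfl fun i _ => ?_
    rw [Nat.factorial_succ]
    push_cast
    ring

/-- With δ > 0 such that cos θ − α_i sin θ > 0 for all i and |θ| < arctan δ,
the function F(t) = cos²(arctan t)·If(arctan t) is C^∞ on (−δ,δ),
Σ_i (α_i^k − α_{i+1}^k) a_i = F^{(k−1)}(0)/(k−1)! for k = 1,…,N, and the vector of values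
(a₁,…,a_N) equals A⁻¹ applied to (F(0), F'(0)/1!, …, F^{(N−1)}(0)/(N−1)!). -/
theorem stmt_3 (N : ℕ) (hN : 1 ≤ N) (α : Fin (N + 1) → ℝ) (hα : StrictAnti α)
    (a : Fin N → ℝ) (f : ℝ × ℝ → ℝ)
    (hf1 : ∀ i : Fin N, ∀ x y : ℝ,
      0 < y → α i.succ * y < x → x < α i.castSucc * y → f (x, y) = a i)
    (hf0 : ∀ x y : ℝ,
      (¬ ∃ i : Fin N, 0 < y ∧ α i.succ * y < x ∧ x < α i.castSucc * y) → f (x, y) = 0)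
    (δ : ℝ) (hδ : 0 < δ)
    (hpos : ∀ i : Fin (N + 1), ∀ θ : ℝ, |θ| < arctan δ → 0 < cos θ - α i * sin θ)
    (F : ℝ → ℝ)
    (hF : ∀ t : ℝ, F t = cos (arctan t) ^ 2 *
      ∫ s : ℝ, f (-sin (arctan t) + s * cos (arctan t), cos (arctan t) + s * sin (arctan t))) :
    ContDiffOn ℝ (⊤ : ℕ∞) F (Set.Ioo (-δ) δ) ∧
    (∀ k : Fin N, ∑ i : Fin N,
        (α i.castSucc ^ ((k : ℕ) + 1) - α i.succ ^ ((k : ℕ) + 1)) * a i =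
      iteratedDeriv (k : ℕ) F 0 / (Nat.factorial (k : ℕ) : ℝ)) ∧
    a = (Matrix.of fun k i : Fin N =>
        α i.castSucc ^ ((k : ℕ) + 1) - α i.succ ^ ((k : ℕ) + 1))⁻¹.mulVec
      (fun k : Fin N => iteratedDeriv (k : ℕ) F 0 / (Nat.factorial (k : ℕ) : ℝ)) := by
  classical
  set G : ℝ → ℝ := fun u => ∑ i : Fin N, a i *
    (α i.castSucc / (1 - α i.castSucc * u) - α i.succ / (1 - α i.succ * u)) with hG
  have habs : ∀ t ∈ Set.Ioo (-δ) δ, |arctan t| < arctan δ := by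
    intro t ht
    rw [abs_lt]
    constructor
    · rw [← Real.arctan_neg]
      exact Real.arctan_strictMono (by linarith [ht.1])
    · exact Real.arctan_strictMono ht.2
  have hcosα : ∀ t ∈ Set.Ioo (-δ) δ, ∀ j : Fin (N+1),
      0 < cos (arctan t) - α j * sin (arctan t) :=
    fun t ht j => hpos j _ (habs t ht)
  have h1pos : ∀ t ∈ Set.Ioo (-δ) δ, ∀ j : Fin (N+1), 0 < 1 - α j * t := by
    intro t ht j
    have h := hcosα t ht j
    rw [aux_sin_arctan t] at h
    have hc := Real.cos_arctan_pos t
    nlinarith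
  have hFG : ∀ t ∈ Set.Ioo (-δ) δ, F t = G t := by
    intro t ht
    rw [hF t, aux_integral α hα a f hf1 hf0 (arctan t) (hcosα t ht), Finset.mul_sum]
    apply Finset.sum_congr rfl
    intro i _
    have e1 := aux_cos_sq_g t (α i.castSucc) (hcosα t ht _)
    have e2 := aux_cos_sq_g t (α i.succ) (hcosα t ht _)
    calc cos (arctan t) ^ 2 * (a i *
          ((sin (arctan t) + α i.castSucc * cos (arctan t)) /
            (cos (arctan t) - α i.castSucc * sin (arctan t))
          - (sin (arctan t) + α i.succ * cos (arctan t)) /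
            (cos (arctan t) - α i.succ * sin (arctan t))))
        = a i * (cos (arctan t) ^ 2 *
          ((sin (arctan t) + α i.castSucc * cos (arctan t)) /
            (cos (arctan t) - α i.castSucc * sin (arctan t)))
          - cos (arctan t) ^ 2 *
          ((sin (arctan t) + α i.succ * cos (arctan t)) /
            (cos (arctan t) - α i.succ * sin (arctan t)))) := by ring
      _ = a i * (α i.castSucc / (1 - α i.castSucc * t) - α i.succ / (1 - α i.succ * t)) := by
          rw [e1, e2]; ring
  have hsub : Set.Ioo (-δ) δ ⊆ {u : ℝ | ∀ j : Fin (N+1), 1 - α j * u ≠ 0} :=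
    fun t ht j => (h1pos t ht j).ne'
  have hGsmooth : ContDiffOn ℝ (⊤ : ℕ∞) G {u : ℝ | ∀ j : Fin (N+1), 1 - α j * u ≠ 0} := by
    apply ContDiffOn.sum
    intro i _
    apply ContDiffOn.mul contDiffOn_const
    apply ContDiffOn.sub
    · exact contDiffOn_const.div
        (contDiffOn_const.sub ((contDiff_const.mul contDiff_id).contDiffOn))
        (fun u hu => hu i.castSucc)
    · exact contDiffOn_const.div
        (contDiffOn_const.sub ((contDiff_const.mul contDiff_id).contDiffOn))
        (fun u hu => hu i.succ)
  have hFsm : ContDiffOn ℝ (⊤ : ℕ∞) F (Set.Ioo (-δ) δ) :=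
    ((hGsmooth.mono hsub).congr hFG)
  have h0mem : (0:ℝ) ∈ Set.Ioo (-δ) δ := ⟨neg_lt_zero.mpr hδ, hδ⟩
  have hevF : F =ᶠ[nhds 0] G := by
    filter_upwards [isOpen_Ioo.mem_nhds h0mem] with u hu using hFG u hu
  have hder : ∀ k : ℕ, iteratedDeriv k F 0 = ∑ i : Fin N,
      a i * ((k.factorial : ℝ) * (α i.castSucc ^ (k+1) - α i.succ ^ (k+1))) := by
    intro k
    rw [hevF.iteratedDeriv_eq k]
    have := aux_iter α a k 0 (fun j => by norm_num)
    simpa using this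
  have h2 : ∀ k : Fin N, ∑ i : Fin N,
      (α i.castSucc ^ ((k : ℕ) + 1) - α i.succ ^ ((k : ℕ) + 1)) * a i =
      iteratedDeriv (k : ℕ) F 0 / (Nat.factorial (k : ℕ) : ℝ) := by
    intro k
    rw [hder (k : ℕ), eq_div_iff
      (Nat.cast_ne_zero.mpr (Nat.factorial_ne_zero (k : ℕ)) : ((k:ℕ).factorial : ℝ) ≠ 0),
      Finset.sum_mul]
    exact Finset.sum_congr rfl fun i _ => by ring
  refine ⟨hFsm, h2, ?_⟩
  have hmv : (Matrix.of fun k i : Fin N =>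
      α i.castSucc ^ ((k : ℕ) + 1) - α i.succ ^ ((k : ℕ) + 1)).mulVec a =
      fun k : Fin N => iteratedDeriv (k : ℕ) F 0 / (Nat.factorial (k : ℕ) : ℝ) := by
    funext k
    rw [← h2 k]
    simp [Matrix.mulVec, dotProduct]
  rw [← hmv, Matrix.mulVec_mulVec,
    Matrix.nonsing_inv_mul _ (isUnit_iff_ne_zero.mpr (aux_det_ne_zero α hα.injective)),
    Matrix.one_mulVec]
end

section
/- Let f and f̃ be the conical functions associated with the same slopes α₁ > α₂ > … > α_{N+1} and with values (a₁,…,a_N) and (ã₁,…,ã_N) respectively. If If(θ) = If̃(θ) for all θ in some neighborhood of 0, then a_i = ã_i for every i ∈ {1,…,N}. In particular, a conical function whose X-ray data If vanishes identically near θ = 0 is identically zero. -/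
/-!
The line `ℓ_θ` crosses the ray `x = α y` at the parameter `t_α(θ)`, and these parameters are
ordered like the slopes, so `ℓ_θ` meets the `i`-th sector in an interval of length
`t_{αᵢ}(θ) - t_{αᵢ₊₁}(θ)` and `If(θ) = ∑ᵢ aᵢ (t_{αᵢ}(θ) - t_{αᵢ₊₁}(θ))`. For `θ = arctan (1/u)`
one finds `t_α(θ) = (1 + u²)/(u - α) - u`, hence for all large `u`
`If(θ) = (1 + u²) ∑ⱼ eⱼ / (u - αⱼ)`, where `eⱼ = aⱼ - aⱼ₋₁` are the jumps of `a` (with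
`a₀ = a_{N+1} = 0` in the paper's indexing). A sum of partial fractions with distinct poles vanishing
at infinitely many points has zero coefficients (barycentric Lagrange interpolation), so the data
`If` near `θ = 0` determines the jumps of `a`, and the jumps determine `a`.
-/

open Real MeasureTheory Filter Topology Function

open Polynomial Lagrange in
theorem eq_zero_of_sum_div_sub_eq_zero {F ι : Type*} [Field F] [Fintype ι] [DecidableEq ι]
    {v : ι → F} (hv : Function.Injective v) {e : ι → F} {S : Set F} (hS : S.Infinite)
    (h : ∀ x ∈ S, ∑ j, e j / (x - v j) = 0) (j : ι) : e j = 0 := by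
  have hw (i : ι) : nodalWeight Finset.univ v i ≠ 0 :=
    nodalWeight_ne_zero hv.injOn (Finset.mem_univ i)
  set r : ι → F := fun i => e i / nodalWeight Finset.univ v i
  have hroots : S \ Set.range v ⊆ {x | IsRoot (interpolate Finset.univ v r) x} := by
    rintro x ⟨hxS, hxv⟩
    have hx : ∀ i ∈ Finset.univ, x ≠ v i := fun i _ hxi => hxv ⟨i, hxi.symm⟩
    have hterm (i : ι) : nodalWeight Finset.univ v i * (x - v i)⁻¹ * r i = e i / (x - v i) := by
      simp only [r]
      field_simp [hw i]
    simp only [Set.mem_ofPred_eq, IsRoot.def, eval_interpolate_not_at_node r hx, hterm,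
      h x hxS, mul_zero]
  have hzero : interpolate Finset.univ v r = 0 :=
    eq_zero_of_infinite_isRoot _ ((hS.sdiff (Set.finite_range v)).mono hroots)
  have hrj := eval_interpolate_at_node r hv.injOn (Finset.mem_univ j)
  rw [hzero, eval_zero, eq_comm, div_eq_zero_iff] at hrj
  exact hrj.resolve_right (hw j)

theorem apply_eq_sum_indicator_of_pairwise_disjoint {ι X M : Type*} [Fintype ι]
    [AddCommMonoid M] {S : ι → Set X} (hS : Pairwise (Disjoint on S)) {f : X → M}
    {a : ι → M} (h₁ : ∀ i, ∀ x ∈ S i, f x = a i) (h₀ : ∀ x, (∀ i, x ∉ S i) → f x = 0)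
    (x : X) : f x = ∑ i, (S i).indicator (fun _ => a i) x := by
  by_cases hx : ∃ i, x ∈ S i
  · obtain ⟨i, hi⟩ := hx
    rw [Finset.sum_eq_single i (fun j _ hji => Set.indicator_of_notMem
      (Set.disjoint_left.1 (hS hji.symm) hi) _) (by simp), Set.indicator_of_mem hi, h₁ i x hi]
  · rw [not_exists] at hx
    simp [h₀ x hx, Set.indicator_of_notMem (hx _)]

namespace Fin

variable {G : Type*} [AddCommGroup G] {N : ℕ}

/-- `jump a j = a j - a (j - 1)`, where `a` is extended by `0` at both ends. -/
def jump (a : Fin N → G) (j : Fin (N + 1)) : G :=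
  snoc (α := fun _ => G) a 0 j - cons (α := fun _ => G) 0 a j

theorem sum_smul_sub_eq_sum_jump_smul {R : Type*} [Ring R] [Module R G] (a : Fin N → R)
    (g : Fin (N + 1) → G) :
    ∑ i, a i • (g i.castSucc - g i.succ) = ∑ j, jump a j • g j := by
  have hsnoc : ∑ j, snoc (α := fun _ => R) a 0 j • g j = ∑ i, a i • g i.castSucc := by
    simp [sum_univ_castSucc]
  have hcons : ∑ j, cons (α := fun _ => R) 0 a j • g j = ∑ i, a i • g i.succ := by
    simp [sum_univ_succ]
  simp only [jump, sub_smul, Finset.sum_sub_distrib, smul_sub, hsnoc, hcons]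

theorem jump_injective : Function.Injective (jump : (Fin N → G) → Fin (N + 1) → G) := by
  intro a b hab
  funext ⟨k, hk⟩
  induction k with
  | zero =>
    have hzero : castSucc (⟨0, hk⟩ : Fin N) = 0 := by ext; simp
    have := congrFun hab (castSucc ⟨0, hk⟩)
    rw [jump, jump, snoc_castSucc, snoc_castSucc, hzero, cons_zero, cons_zero] at this
    exact sub_left_inj.1 this
  | succ k ih =>
    have hsucc : castSucc (⟨k + 1, hk⟩ : Fin N) = succ ⟨k, by omega⟩ := rfl
    have := congrFun hab (castSucc ⟨k + 1, hk⟩)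
    rw [jump, jump, snoc_castSucc, snoc_castSucc, hsucc, cons_succ, cons_succ,
      ih (by omega)] at this
    exact sub_left_inj.1 this

end Fin

namespace ConicalXRay

noncomputable def line (θ s : ℝ) : ℝ × ℝ := (-sin θ + s * cos θ, cos θ + s * sin θ)

noncomputable def xray (f : ℝ × ℝ → ℝ) (θ : ℝ) : ℝ := ∫ s, f (line θ s)

def sector (β α : ℝ) : Set (ℝ × ℝ) := {p | 0 < p.2 ∧ β * p.2 < p.1 ∧ p.1 < α * p.2}

structure IsConical {N : ℕ} (α : Fin (N + 1) → ℝ) (a : Fin N → ℝ) (f : ℝ × ℝ → ℝ) : Prop where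
  eq_of_mem : ∀ (i : Fin N), ∀ p ∈ sector (α i.succ) (α i.castSucc), f p = a i
  eq_zero : ∀ p, (∀ i : Fin N, p ∉ sector (α i.succ) (α i.castSucc)) → f p = 0

/-- The parameter at which `line θ` meets the line `x = α y`. -/
noncomputable def crossing (α θ : ℝ) : ℝ := (sin θ + α * cos θ) / (cos θ - α * sin θ)

section Scalar

variable {α β γ δ θ s u : ℝ}

theorem line_fst_lt_iff (hc : 0 < cos θ - α * sin θ) :
    (line θ s).1 < α * (line θ s).2 ↔ s < crossing α θ := by
  rw [crossing, lt_div_iff₀ hc, line]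
  constructor <;> intro h <;> linarith

theorem lt_line_fst_iff (hc : 0 < cos θ - α * sin θ) :
    α * (line θ s).2 < (line θ s).1 ↔ crossing α θ < s := by
  rw [crossing, div_lt_iff₀ hc, line]
  constructor <;> intro h <;> linarith

theorem crossing_sub_crossing (hα : cos θ - α * sin θ ≠ 0) (hβ : cos θ - β * sin θ ≠ 0) :
    crossing α θ - crossing β θ = (α - β) / ((cos θ - α * sin θ) * (cos θ - β * sin θ)) := by
  rw [crossing, crossing, div_sub_div _ _ hα hβ]
  congr 1
  linear_combination (α - β) * sin_sq_add_cos_sq θ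

theorem crossing_lt_crossing (hβα : β < α) (hα : 0 < cos θ - α * sin θ)
    (hβ : 0 < cos θ - β * sin θ) : crossing β θ < crossing α θ := by
  rw [← sub_pos, crossing_sub_crossing hα.ne' hβ.ne']
  exact div_pos (sub_pos.2 hβα) (mul_pos hα hβ)

theorem line_preimage_sector (hβα : β < α) (hα : 0 < cos θ - α * sin θ)
    (hβ : 0 < cos θ - β * sin θ) :
    line θ ⁻¹' sector β α = Set.Ioo (crossing β θ) (crossing α θ) := by
  ext s
  simp only [Set.mem_preimage, sector, Set.mem_ofPred_eq, Set.mem_Ioo,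
    ← lt_line_fst_iff hβ, ← line_fst_lt_iff hα, and_iff_right_iff_imp]
  rintro ⟨hlo, hhi⟩
  nlinarith

theorem disjoint_sector (hγβ : γ ≤ β) : Disjoint (sector β α) (sector δ γ) := by
  refine Set.disjoint_left.2 fun p hp hp' => ?_
  have := mul_le_mul_of_nonneg_right hγβ hp.1.le
  linarith [hp.2.1, hp'.2.2]

theorem tendsto_arctan_inv_atTop : Tendsto (fun u => arctan u⁻¹) atTop (𝓝 0) :=
  (arctan_zero ▸ continuous_arctan.tendsto 0).comp tendsto_inv_atTop_zero

theorem sin_arctan_inv (u : ℝ) : sin (arctan u⁻¹) = u⁻¹ * cos (arctan u⁻¹) := by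
  have h := tan_arctan u⁻¹
  rwa [tan_eq_sin_div_cos, div_eq_iff (cos_arctan_pos _).ne'] at h

theorem crossing_arctan_inv (hu : u ≠ 0) (huα : u ≠ α) :
    crossing α (arctan u⁻¹) = (1 + u ^ 2) * (u - α)⁻¹ - u := by
  have hc := (cos_arctan_pos u⁻¹).ne'
  have huα' := sub_ne_zero.2 huα
  rw [crossing, sin_arctan_inv]
  field_simp
  ring

theorem cos_sub_mul_sin_arctan_inv_pos (hu : 0 < u) (huα : α < u) :
    0 < cos (arctan u⁻¹) - α * sin (arctan u⁻¹) := by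
  have hc := cos_arctan_pos u⁻¹
  rw [sin_arctan_inv, show cos (arctan u⁻¹) - α * (u⁻¹ * cos (arctan u⁻¹)) =
    cos (arctan u⁻¹) * ((u - α) / u) by field_simp]
  exact mul_pos hc (div_pos (sub_pos.2 huα) hu)

end Scalar

section Conical

variable {N : ℕ} {α : Fin (N + 1) → ℝ} {a : Fin N → ℝ} {f : ℝ × ℝ → ℝ}

theorem pairwise_disjoint_sector (hα : StrictAnti α) :
    Pairwise (Disjoint on fun i : Fin N => sector (α i.succ) (α i.castSucc)) := by
  have hlt {i j : Fin N} (hij : i < j) :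
      Disjoint (sector (α i.succ) (α i.castSucc)) (sector (α j.succ) (α j.castSucc)) :=
    disjoint_sector (hα.antitone (Fin.succ_le_castSucc_iff.2 hij))
  intro i j hij
  rcases hij.lt_or_gt with hij | hij
  · exact hlt hij
  · exact (hlt hij).symm

theorem IsConical.xray_eq_sum (hf : IsConical α a f) (hα : StrictAnti α)
    (hθ : ∀ j, 0 < cos θ - α j * sin θ) :
    xray f θ = ∑ i, a i * (crossing (α i.castSucc) θ - crossing (α i.succ) θ) := by
  have hslope (i : Fin N) : α i.succ < α i.castSucc := hα i.castSucc_lt_succ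
  have hsplit (s : ℝ) : f (line θ s) =
      ∑ i, (Set.Ioo (crossing (α i.succ) θ) (crossing (α i.castSucc) θ)).indicator
        (fun _ => a i) s := by
    rw [apply_eq_sum_indicator_of_pairwise_disjoint (pairwise_disjoint_sector hα) hf.eq_of_mem
      hf.eq_zero]
    refine Finset.sum_congr rfl fun i _ => ?_
    rw [← line_preimage_sector (hslope i) (hθ _) (hθ _)]
    rfl
  have hint (i : Fin N) : Integrable
      ((Set.Ioo (crossing (α i.succ) θ) (crossing (α i.castSucc) θ)).indicator fun _ => a i) :=
    (integrable_indicator_iff measurableSet_Ioo).2 (integrableOn_const measure_Ioo_lt_top.ne)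
  rw [xray, funext hsplit, integral_finsetSum _ fun i _ => hint i]
  refine Finset.sum_congr rfl fun i _ => ?_
  rw [integral_indicator_const _ measurableSet_Ioo, smul_eq_mul, mul_comm,
    Real.volume_real_Ioo_of_le (crossing_lt_crossing (hslope i) (hθ _) (hθ _)).le]

theorem IsConical.xray_arctan_inv (hf : IsConical α a f) (hα : StrictAnti α) (hu : 0 < u)
    (huα : ∀ j, α j < u) :
    xray f (arctan u⁻¹) = (1 + u ^ 2) * ∑ j, Fin.jump a j / (u - α j) := by
  have htelescope := Fin.sum_smul_sub_eq_sum_jump_smul a fun j => (u - α j)⁻¹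
  simp only [smul_eq_mul] at htelescope
  rw [hf.xray_eq_sum hα fun j => cos_sub_mul_sin_arctan_inv_pos hu (huα j)]
  simp only [crossing_arctan_inv hu.ne' (huα _).ne', div_eq_mul_inv, ← htelescope,
    Finset.mul_sum]
  exact Finset.sum_congr rfl fun _ _ => by ring

end Conical

end ConicalXRay

open ConicalXRay in
theorem stmt_4_general (N : ℕ) (α : Fin (N + 1) → ℝ) (hα : StrictAnti α)
    (a atil : Fin N → ℝ) (f ftil : ℝ × ℝ → ℝ)
    (hf1 : ∀ i : Fin N, ∀ x y : ℝ,
      0 < y → α i.succ * y < x → x < α i.castSucc * y → f (x, y) = a i)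
    (hf0 : ∀ x y : ℝ,
      (¬ ∃ i : Fin N, 0 < y ∧ α i.succ * y < x ∧ x < α i.castSucc * y) → f (x, y) = 0)
    (hftil1 : ∀ i : Fin N, ∀ x y : ℝ,
      0 < y → α i.succ * y < x → x < α i.castSucc * y → ftil (x, y) = atil i)
    (hftil0 : ∀ x y : ℝ,
      (¬ ∃ i : Fin N, 0 < y ∧ α i.succ * y < x ∧ x < α i.castSucc * y) → ftil (x, y) = 0)
    (hI : ∀ᶠ θ in nhds (0 : ℝ),
      (∫ s : ℝ, f (-sin θ + s * cos θ, cos θ + s * sin θ)) =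
      (∫ s : ℝ, ftil (-sin θ + s * cos θ, cos θ + s * sin θ))) :
    ∀ i : Fin N, a i = atil i := by
  have hf : IsConical α a f := ⟨fun i p hp => hf1 i p.1 p.2 hp.1 hp.2.1 hp.2.2,
    fun p hp => hf0 p.1 p.2 fun ⟨i, hi⟩ => hp i hi⟩
  have hftil : IsConical α atil ftil := ⟨fun i p hp => hftil1 i p.1 p.2 hp.1 hp.2.1 hp.2.2,
    fun p hp => hftil0 p.1 p.2 fun ⟨i, hi⟩ => hp i hi⟩
  have hjump : ∀ᶠ u in atTop, ∑ j, (Fin.jump a j - Fin.jump atil j) / (u - α j) = 0 := by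
    filter_upwards [tendsto_arctan_inv_atTop.eventually hI, eventually_gt_atTop 0,
      eventually_all.2 fun j => eventually_gt_atTop (α j)] with u hIu hu huα
    change xray f _ = xray ftil _ at hIu
    rw [hf.xray_arctan_inv hα hu huα, hftil.xray_arctan_inv hα hu huα,
      mul_right_inj' (by positivity)] at hIu
    simp only [sub_div, Finset.sum_sub_distrib, hIu, sub_self]
  have hroots : {u | ∑ j, (Fin.jump a j - Fin.jump atil j) / (u - α j) = 0}.Infinite :=
    Set.infinite_of_forall_exists_gt fun b => (hjump.and (eventually_gt_atTop b)).exists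
  intro i
  refine congrFun (Fin.jump_injective (funext fun j => ?_)) i
  exact sub_eq_zero.1 (eq_zero_of_sum_div_sub_eq_zero hα.injective hroots (fun _ hu => hu) j)

/-- Two conical functions with the same slopes α₁ > … > α_{N+1} and values
(a_i), (ã_i) whose X-ray data agree for all θ in a neighborhood of 0 have equal values;
in particular a conical function with vanishing X-ray data near θ = 0 is identically zero. -/
theorem stmt_4 (N : ℕ) (hN : 1 ≤ N) (α : Fin (N + 1) → ℝ) (hα : StrictAnti α)
    (a atil : Fin N → ℝ) (f ftil : ℝ × ℝ → ℝ)
    (hf1 : ∀ i : Fin N, ∀ x y : ℝ,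
      0 < y → α i.succ * y < x → x < α i.castSucc * y → f (x, y) = a i)
    (hf0 : ∀ x y : ℝ,
      (¬ ∃ i : Fin N, 0 < y ∧ α i.succ * y < x ∧ x < α i.castSucc * y) → f (x, y) = 0)
    (hftil1 : ∀ i : Fin N, ∀ x y : ℝ,
      0 < y → α i.succ * y < x → x < α i.castSucc * y → ftil (x, y) = atil i)
    (hftil0 : ∀ x y : ℝ,
      (¬ ∃ i : Fin N, 0 < y ∧ α i.succ * y < x ∧ x < α i.castSucc * y) → ftil (x, y) = 0)
    (hI : ∀ᶠ θ in nhds (0 : ℝ),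
      (∫ s : ℝ, f (-sin θ + s * cos θ, cos θ + s * sin θ)) =
      (∫ s : ℝ, ftil (-sin θ + s * cos θ, cos θ + s * sin θ))) :
    ∀ i : Fin N, a i = atil i :=
  stmt_4_general N α hα a atil f ftil hf1 hf0 hftil1 hftil0 hI
end

section
/- Let κ > 0 and j ∈ ℝ, and let h : ℝ → ℝ satisfy h(t) = (κ/2) t² + (j/6) t³ + o(t³) as t → 0. Let ε₀ > 0 and let t₁ : (0, ε₀) → ℝ be a function with t₁(ε) > 0 for all ε ∈ (0, ε₀), t₁(ε) → 0 as ε → 0⁺, and h(t₁(ε)) = ε for all ε ∈ (0, ε₀). Then t₁(ε) = √(2ε/κ) − (j/(3κ²)) ε + o(ε) as ε → 0⁺. -/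
open Asymptotics Filter Topology

/-!
Put `c(ε) = (ε - κ t₁(ε)² / 2) / t₁(ε)³`; the expansion of `h` gives `c(ε) → j / 6`, and hence
`ε / t₁(ε)² → κ / 2`. Rationalizing `t - √(2ε/κ)` against `t + √(2ε/κ)` turns it into
`-2 c t³ / (κ (t + √(2ε/κ)))`; dividing by `ε ~ κ t² / 2` shows that `(t - √(2ε/κ)) / ε` tends to
`-2 (j / 6) / κ² = -j / (3κ²)`.
-/

theorem tendsto_div_cube_of_isLittleO {h : ℝ → ℝ} {a b : ℝ}
    (hh : (fun t => h t - (a * t ^ 2 + b * t ^ 3)) =o[𝓝 0] fun t => t ^ 3) :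
    Tendsto (fun t => (h t - a * t ^ 2) / t ^ 3) (𝓝[≠] 0) (𝓝 b) := by
  have hlim := (hh.tendsto_div_nhds_zero.mono_left (nhdsWithin_le_nhds (s := {0}ᶜ))).add_const b
  rw [zero_add] at hlim
  refine hlim.congr' ?_
  filter_upwards [self_mem_nhdsWithin] with t (ht : t ≠ 0)
  field_simp
  ring

theorem sub_sqrt_div_eq {κ t ε : ℝ} (hκ : 0 < κ) (ht : 0 < t) (hε : 0 < ε) :
    (t - √(2 * ε / κ)) / ε =
      -2 * ((ε - κ / 2 * t ^ 2) / t ^ 3) / (κ * (1 + √(2 * (ε / t ^ 2) / κ)) * (ε / t ^ 2)) := by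
  set s := √(2 * ε / κ)
  have hs : 0 < s := by positivity
  have hs_sq : κ * s ^ 2 = 2 * ε := by
    rw [Real.sq_sqrt (by positivity)]
    field_simp
  have hs_div : √(2 * (ε / t ^ 2) / κ) = s / t := by
    rw [show 2 * (ε / t ^ 2) / κ = 2 * ε / κ / t ^ 2 by ring, Real.sqrt_div' _ (by positivity),
      Real.sqrt_sq ht.le]
  rw [hs_div]
  field_simp
  linear_combination -hs_sq

section

variable {α : Type*} {l : Filter α} {κ c : ℝ} {t ε : α → ℝ}

theorem tendsto_div_sq_of_tendsto_cubic_coeff (ht : Tendsto t l (𝓝 0))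
    (ht0 : ∀ᶠ x in l, t x ≠ 0)
    (hc : Tendsto (fun x => (ε x - κ / 2 * t x ^ 2) / t x ^ 3) l (𝓝 c)) :
    Tendsto (fun x => ε x / t x ^ 2) l (𝓝 (κ / 2)) := by
  have hlim := (hc.mul ht).const_add (κ / 2)
  rw [mul_zero, add_zero] at hlim
  refine hlim.congr' ?_
  filter_upwards [ht0] with x hx
  field_simp
  ring

theorem tendsto_sub_sqrt_div_of_tendsto_cubic_coeff (hκ : 0 < κ) (ht : Tendsto t l (𝓝 0))
    (htpos : ∀ᶠ x in l, 0 < t x) (hεpos : ∀ᶠ x in l, 0 < ε x)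
    (hc : Tendsto (fun x => (ε x - κ / 2 * t x ^ 2) / t x ^ 3) l (𝓝 c)) :
    Tendsto (fun x => (t x - √(2 * ε x / κ)) / ε x) l (𝓝 (-2 * c / κ ^ 2)) := by
  have hq := tendsto_div_sq_of_tendsto_cubic_coeff ht (htpos.mono fun _ h => h.ne') hc
  have hsqrt : Tendsto (fun x => √(2 * (ε x / t x ^ 2) / κ)) l (𝓝 1) := by
    have := ((hq.const_mul 2).div_const κ).sqrt
    rwa [show 2 * (κ / 2) / κ = 1 by field_simp, Real.sqrt_one] at this
  have hlim := (hc.const_mul (-2)).div (((hsqrt.const_add 1).const_mul κ).mul hq)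
    (by positivity)
  rw [show -2 * c / (κ * (1 + 1) * (κ / 2)) = -2 * c / κ ^ 2 by ring] at hlim
  refine hlim.congr' ?_
  filter_upwards [htpos, hεpos] with x htx hεx
  exact (sub_sqrt_div_eq hκ htx hεx).symm

end

/-- If h(t) = (κ/2)t² + (j/6)t³ + o(t³) with κ > 0, and t₁(ε) > 0 satisfies
t₁(ε) → 0 as ε → 0⁺ and h(t₁(ε)) = ε on (0, ε₀), then
t₁(ε) = √(2ε/κ) − (j/(3κ²))ε + o(ε) as ε → 0⁺. -/
theorem stmt_7 (κ j : ℝ) (hκ : 0 < κ) (h : ℝ → ℝ)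
    (hh : (fun t : ℝ => h t - (κ / 2 * t ^ 2 + j / 6 * t ^ 3)) =o[nhds 0]
      fun t : ℝ => t ^ 3)
    (ε₀ : ℝ) (hε₀ : 0 < ε₀) (t₁ : ℝ → ℝ)
    (hpos : ∀ ε ∈ Set.Ioo 0 ε₀, 0 < t₁ ε)
    (hlim : Tendsto t₁ (nhdsWithin 0 (Set.Ioi 0)) (nhds 0))
    (hroot : ∀ ε ∈ Set.Ioo 0 ε₀, h (t₁ ε) = ε) :
    (fun ε : ℝ => t₁ ε - (Real.sqrt (2 * ε / κ) - j / (3 * κ ^ 2) * ε))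
      =o[nhdsWithin 0 (Set.Ioi 0)] fun ε : ℝ => ε := by
  have hmem : ∀ᶠ ε in 𝓝[>] 0, ε ∈ Set.Ioo 0 ε₀ := Ioo_mem_nhdsGT hε₀
  have ht : Tendsto t₁ (𝓝[>] 0) (𝓝[≠] 0) :=
    tendsto_nhdsWithin_iff.2 ⟨hlim, hmem.mono fun ε hε => (hpos ε hε).ne'⟩
  have hc : Tendsto (fun ε => (ε - κ / 2 * t₁ ε ^ 2) / t₁ ε ^ 3) (𝓝[>] 0) (𝓝 (j / 6)) :=
    ((tendsto_div_cube_of_isLittleO hh).comp ht).congr'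
      (hmem.mono fun ε hε => by simp only [Function.comp, hroot ε hε])
  have hquot := (tendsto_sub_sqrt_div_of_tendsto_cubic_coeff hκ hlim (hmem.mono hpos)
    (hmem.mono fun _ hε => hε.1) hc).add_const (j / (3 * κ ^ 2))
  rw [show -2 * (j / 6) / κ ^ 2 + j / (3 * κ ^ 2) = 0 by ring] at hquot
  rw [isLittleO_iff_tendsto' (hmem.mono fun ε hε h0 => absurd h0 hε.1.ne')]
  refine hquot.congr' ?_
  filter_upwards [hmem] with ε hε
  field_simp [hε.1.ne']
  ring
end

section
/- Let κ > 0 and j ∈ ℝ, and let h : ℝ → ℝ satisfy h(t) = (κ/2) t² + (j/6) t³ + o(t³) as t → 0. Let ε₀ > 0 and let t_N : (0, ε₀) → ℝ be a function with t_N(ε) < 0 for all ε ∈ (0, ε₀), t_N(ε) → 0 as ε → 0⁺, and h(t_N(ε)) = ε for all ε ∈ (0, ε₀). Then t_N(ε) = −√(2ε/κ) − (j/(3κ²)) ε + o(ε) as ε → 0⁺. -/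
open Asymptotics Filter Topology

/-!
Write the remainder as `h t - (κ/2 t² + j/6 t³) = ρ t³` with `ρ → 0` along the root `t = t_N(ε)`,
and put `s = √(2ε/κ)`, so that `κ s² = 2ε`, and `u = -t/s > 0`. The equation `h(t) = ε` gives
`ε/t² = κ/2 + (j/6 + ρ) t → κ/2`, hence `u² → 1` and `u → 1`. Since `s² - t² = (2/κ)(j/6 + ρ) t³`,
the defect `t + s + jε/(3κ²)` divided by `ε` is exactly `(2/κ²) (j/6 - u³ (j/3 + 2ρ)/(1 + u))`, which tends to
`(2/κ²) (j/6 - j/6) = 0`.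
-/

section CubicRoot

variable {κ j ρ t ε s : ℝ}

lemma div_sq_eq_of_cubic (ht : t ≠ 0) (heq : κ / 2 * t ^ 2 + (j / 6 + ρ) * t ^ 3 = ε) :
    ε / t ^ 2 = κ / 2 + (j / 6 + ρ) * t := by
  rw [← heq]
  field_simp

lemma neg_div_sqrt_sq (hκ : 0 < κ) (hε : 0 < ε) :
    (-t / √(2 * ε / κ)) ^ 2 = κ / 2 / (ε / t ^ 2) := by
  rw [div_pow, neg_sq, Real.sq_sqrt (by positivity)]
  field_simp

lemma add_add_div_eq_of_cubic {u : ℝ} (hκ : 0 < κ) (hs : 0 < s) (hu : 0 < u) (hut : u * s = -t)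
    (hs2 : κ * s ^ 2 = 2 * ε) (heq : κ / 2 * t ^ 2 + (j / 6 + ρ) * t ^ 3 = ε) :
    (t + s + j / (3 * κ ^ 2) * ε) / ε =
      2 / κ ^ 2 * (j / 6 - u ^ 3 * (j / 3 + 2 * ρ) / (1 + u)) := by
  obtain rfl : t = -(u * s) := by linarith
  have hε : ε ≠ 0 := by nlinarith [mul_pos hκ (pow_pos hs 2)]
  have key : (j + 6 * ρ) * u ^ 3 * s = 3 * κ * u ^ 2 - 3 * κ := by
    have : s ^ 2 * ((j + 6 * ρ) * u ^ 3 * s - (3 * κ * u ^ 2 - 3 * κ)) = 0 := by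
      linear_combination (-6 : ℝ) * heq + 3 * hs2
    linear_combination (mul_eq_zero.mp this).resolve_left (by positivity)
  field_simp
  linear_combination 6 * κ * s * key - 6 * u ^ 3 * (j + 6 * ρ) * hs2

end CubicRoot

section RootAsymptotics

variable {α : Type*} {l : Filter α} {κ j : ℝ} {t ε ρ : α → ℝ}

lemma tendsto_neg_div_sqrt_of_cubic (hκ : 0 < κ) (ht : Tendsto t l (𝓝 0))
    (hρ : Tendsto ρ l (𝓝 0)) (hsign : ∀ᶠ x in l, 0 < ε x ∧ t x < 0)
    (heq : ∀ᶠ x in l, κ / 2 * t x ^ 2 + (j / 6 + ρ x) * t x ^ 3 = ε x) :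
    Tendsto (fun x => -t x / √(2 * ε x / κ)) l (𝓝 1) := by
  have hdiv : Tendsto (fun x => ε x / t x ^ 2) l (𝓝 (κ / 2)) := by
    have : Tendsto (fun x => κ / 2 + (j / 6 + ρ x) * t x) l (𝓝 (κ / 2 + (j / 6 + 0) * 0)) :=
      tendsto_const_nhds.add ((tendsto_const_nhds.add hρ).mul ht)
    rw [add_zero, mul_zero, add_zero] at this
    refine this.congr' ?_
    filter_upwards [hsign, heq] with x hx hx'
    exact (div_sq_eq_of_cubic hx.2.ne hx').symm
  have hsq : Tendsto (fun x => (-t x / √(2 * ε x / κ)) ^ 2) l (𝓝 1) := by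
    have : Tendsto (fun x => κ / 2 / (ε x / t x ^ 2)) l (𝓝 (κ / 2 / (κ / 2))) :=
      tendsto_const_nhds.div hdiv (by positivity)
    rw [div_self (by positivity)] at this
    refine this.congr' ?_
    filter_upwards [hsign] with x hx
    exact (neg_div_sqrt_sq hκ hx.1).symm
  have := hsq.sqrt
  rw [Real.sqrt_one] at this
  refine this.congr' ?_
  filter_upwards [hsign] with x ⟨_, htx⟩
  exact Real.sqrt_sq (div_nonneg (neg_nonneg.mpr htx.le) (Real.sqrt_nonneg _))

theorem isLittleO_add_sqrt_of_cubic (hκ : 0 < κ) (ht : Tendsto t l (𝓝 0))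
    (hρ : Tendsto ρ l (𝓝 0)) (hsign : ∀ᶠ x in l, 0 < ε x ∧ t x < 0)
    (heq : ∀ᶠ x in l, κ / 2 * t x ^ 2 + (j / 6 + ρ x) * t x ^ 3 = ε x) :
    (fun x => t x + √(2 * ε x / κ) + j / (3 * κ ^ 2) * ε x) =o[l] ε := by
  set u := fun x => -t x / √(2 * ε x / κ)
  have hu : Tendsto u l (𝓝 1) := tendsto_neg_div_sqrt_of_cubic hκ ht hρ hsign heq
  have hlim : Tendsto (fun x => 2 / κ ^ 2 * (j / 6 - u x ^ 3 * (j / 3 + 2 * ρ x) / (1 + u x))) l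
      (𝓝 (2 / κ ^ 2 * (j / 6 - 1 ^ 3 * (j / 3 + 2 * 0) / (1 + 1)))) :=
    (tendsto_const_nhds.sub (((hu.pow 3).mul (tendsto_const_nhds.add
      (hρ.const_mul 2))).div (tendsto_const_nhds.add hu) (by norm_num))).const_mul _
  rw [show j / 6 - 1 ^ 3 * (j / 3 + 2 * 0) / (1 + 1) = 0 by ring, mul_zero] at hlim
  refine isLittleO_of_tendsto' ?_ (hlim.congr' ?_)
  · filter_upwards [hsign] with x hx h0
    exact absurd h0 hx.1.ne'
  · filter_upwards [hsign, heq] with x ⟨hεx, htx⟩ hx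
    have hs : 0 < √(2 * ε x / κ) := Real.sqrt_pos.mpr (by positivity)
    refine (add_add_div_eq_of_cubic hκ hs (div_pos (neg_pos.mpr htx) hs)
      (div_mul_cancel₀ _ hs.ne') ?_ hx).symm
    rw [Real.sq_sqrt (by positivity)]
    field_simp

end RootAsymptotics

/-- If h(t) = (κ/2)t² + (j/6)t³ + o(t³) with κ > 0, and t_N(ε) < 0 satisfies
t_N(ε) → 0 as ε → 0⁺ and h(t_N(ε)) = ε on (0, ε₀), then
t_N(ε) = −√(2ε/κ) − (j/(3κ²))ε + o(ε) as ε → 0⁺. -/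
theorem stmt_8 (κ j : ℝ) (hκ : 0 < κ) (h : ℝ → ℝ)
    (hh : (fun t : ℝ => h t - (κ / 2 * t ^ 2 + j / 6 * t ^ 3)) =o[nhds 0]
      fun t : ℝ => t ^ 3)
    (ε₀ : ℝ) (hε₀ : 0 < ε₀) (tN : ℝ → ℝ)
    (hneg : ∀ ε ∈ Set.Ioo 0 ε₀, tN ε < 0)
    (hlim : Tendsto tN (nhdsWithin 0 (Set.Ioi 0)) (nhds 0))
    (hroot : ∀ ε ∈ Set.Ioo 0 ε₀, h (tN ε) = ε) :
    (fun ε : ℝ => tN ε - (-Real.sqrt (2 * ε / κ) - j / (3 * κ ^ 2) * ε))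
      =o[nhdsWithin 0 (Set.Ioi 0)] fun ε : ℝ => ε := by
  set ρ := fun ε => (h (tN ε) - (κ / 2 * tN ε ^ 2 + j / 6 * tN ε ^ 3)) / tN ε ^ 3
  have hρ : Tendsto ρ (𝓝[>] 0) (𝓝 0) := (hh.comp_tendsto hlim).tendsto_div_nhds_zero
  have hIoo : ∀ᶠ ε in 𝓝[>] 0, ε ∈ Set.Ioo 0 ε₀ := Ioo_mem_nhdsGT hε₀
  have hsign : ∀ᶠ ε in 𝓝[>] 0, 0 < ε ∧ tN ε < 0 := by
    filter_upwards [hIoo] with ε hε using ⟨hε.1, hneg ε hε⟩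
  have heq : ∀ᶠ ε in 𝓝[>] 0, κ / 2 * tN ε ^ 2 + (j / 6 + ρ ε) * tN ε ^ 3 = ε := by
    filter_upwards [hIoo] with ε hε
    have : tN ε ^ 3 ≠ 0 := pow_ne_zero 3 (hneg ε hε).ne
    simp only [ρ, add_mul, div_mul_cancel₀ _ this, hroot ε hε]
    ring
  refine (isLittleO_add_sqrt_of_cubic hκ hlim hρ hsign heq).congr_left fun ε => ?_
  ring
end

section
/- Let I, J, K ⊂ ℝ be open intervals with 0 ∈ I, t₀ ∈ J, s₀ ∈ K, and let Γ : I × J → ℝ² and σ : K → ℝ² be C^∞ maps with σ(s₀) = Γ(0, t₀). Write γ = Γ(0, ·) and J₀ = ∂_ε Γ(0, t₀), and assume that γ'(t₀) and J₀ are linearly independent. Write σ'(s₀) = u₁ γ'(t₀) + u₂ (J₀/‖J₀‖) in the basis (γ'(t₀), J₀/‖J₀‖) of ℝ², and assume u₂ ≠ 0 (i.e. σ'(s₀) and γ'(t₀) are linearly independent). Then there exist ε₁ > 0, open neighborhoods U of s₀ and V of t₀, and C^∞ functions s, t : (−ε₁, ε₁) → ℝ with s(0) = s₀ and t(0) = t₀,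 such that for all ε ∈ (−ε₁, ε₁) and all (u, v) ∈ U × V one has σ(u) = Γ(ε, v) if and only if (u, v) = (s(ε), t(ε)); moreover s'(0) = ‖J₀‖/u₂ and t'(0) = ‖J₀‖ u₁/u₂. -/
set_option maxHeartbeats 1000000 in
/-- Implicit-function-theorem parametrization of the intersection of a
smooth variation through curves Γ with a non-tangential edge σ: there are smooth
functions s(ε), t(ε) with s(0) = s₀, t(0) = t₀ parametrizing, in a neighborhood
U × V of (s₀, t₀), the solutions of σ(u) = Γ(ε, v); moreover s'(0) = ‖J₀‖/u₂ and
t'(0) = ‖J₀‖u₁/u₂, where σ'(s₀) = u₁ γ'(t₀) + u₂ J₀/‖J₀‖. -/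
theorem stmt_10 (I J K : Set ℝ) (hI : IsOpen I) (hJ : IsOpen J) (hK : IsOpen K)
    (hIint : ∃ a b : ℝ, I = Set.Ioo a b) (hJint : ∃ a b : ℝ, J = Set.Ioo a b)
    (hKint : ∃ a b : ℝ, K = Set.Ioo a b)
    (t₀ s₀ : ℝ) (h0I : (0 : ℝ) ∈ I) (ht₀ : t₀ ∈ J) (hs₀ : s₀ ∈ K)
    (Γ : ℝ × ℝ → ℝ × ℝ) (σ : ℝ → ℝ × ℝ)
    (hΓ : ContDiffOn ℝ (⊤ : ℕ∞) Γ (I ×ˢ J)) (hσ : ContDiffOn ℝ (⊤ : ℕ∞) σ K)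
    (hmeet : σ s₀ = Γ (0, t₀))
    (γ' J₀ : ℝ × ℝ)
    (hγ' : γ' = deriv (fun t : ℝ => Γ (0, t)) t₀)
    (hJ₀ : J₀ = deriv (fun ε : ℝ => Γ (ε, t₀)) 0)
    (hindep : LinearIndependent ℝ ![γ', J₀])
    (u₁ u₂ : ℝ) (hσ' : deriv σ s₀ = u₁ • γ' + u₂ • (‖J₀‖⁻¹ • J₀)) (hu₂ : u₂ ≠ 0) :
    ∃ ε₁ : ℝ, 0 < ε₁ ∧ ∃ U V : Set ℝ, IsOpen U ∧ IsOpen V ∧ s₀ ∈ U ∧ t₀ ∈ V ∧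
      ∃ s t : ℝ → ℝ,
        ContDiffOn ℝ (⊤ : ℕ∞) s (Set.Ioo (-ε₁) ε₁) ∧ ContDiffOn ℝ (⊤ : ℕ∞) t (Set.Ioo (-ε₁) ε₁) ∧
        s 0 = s₀ ∧ t 0 = t₀ ∧
        (∀ ε ∈ Set.Ioo (-ε₁) ε₁, ∀ u ∈ U, ∀ v ∈ V,
          (σ u = Γ (ε, v) ↔ u = s ε ∧ v = t ε)) ∧
        deriv s 0 = ‖J₀‖ / u₂ ∧ deriv t 0 = ‖J₀‖ * u₁ / u₂ := by
  classical
  -- basic nonvanishing facts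
  have hJ₀ne : J₀ ≠ 0 := by
    have := hindep.ne_zero 1
    simpa using this
  have hnJ₀ : ‖J₀‖ ≠ 0 := norm_ne_zero_iff.2 hJ₀ne
  have hpair : ∀ c d : ℝ, c • γ' + d • J₀ = 0 → c = 0 ∧ d = 0 := by
    intro c d h
    exact LinearIndependent.pair_iff.1 hindep c d h
  -- the map G and its domain
  set a : ℝ × (ℝ × ℝ) := (0, (s₀, t₀)) with ha
  set G : ℝ × (ℝ × ℝ) → ℝ × (ℝ × ℝ) := fun p => (p.1, σ p.2.1 - Γ (p.1, p.2.2)) with hGdef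
  set Ω : Set (ℝ × (ℝ × ℝ)) := I ×ˢ (K ×ˢ J) with hΩ
  have hΩo : IsOpen Ω := hI.prod (hK.prod hJ)
  have haΩ : a ∈ Ω := ⟨h0I, hs₀, ht₀⟩
  have hGs : ContDiffOn ℝ (⊤ : ℕ∞) G Ω := by
    apply ContDiffOn.prodMk
    · exact contDiff_fst.contDiffOn
    · apply ContDiffOn.sub
      · exact hσ.comp (contDiff_fst.comp contDiff_snd).contDiffOn fun p hp => hp.2.1
      · exact hΓ.comp (contDiff_fst.prodMk (contDiff_snd.comp contDiff_snd)).contDiffOn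
          fun p hp => ⟨hp.1, hp.2.2⟩
  have hGa : ContDiffAt ℝ (⊤ : ℕ∞) G a := hGs.contDiffAt (hΩo.mem_nhds haΩ)
  -- derivatives of Γ and σ
  have hΓat : ContDiffAt ℝ (⊤ : ℕ∞) Γ (0, t₀) := hΓ.contDiffAt ((hI.prod hJ).mem_nhds ⟨h0I, ht₀⟩)
  set A := fderiv ℝ Γ (0, t₀) with hAdef
  have hA : HasFDerivAt Γ A (0, t₀) := (hΓat.differentiableAt (by simp)).hasFDerivAt
  have hγA : γ' = A (0, 1) := by
    have h1 : HasDerivAt (fun t : ℝ => (((0 : ℝ), t) : ℝ × ℝ)) (0, 1) t₀ :=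
      (hasDerivAt_const t₀ (0 : ℝ)).prodMk (hasDerivAt_id t₀)
    exact hγ'.trans (hA.comp_hasDerivAt t₀ h1).deriv
  have hJA : J₀ = A (1, 0) := by
    have h1 : HasDerivAt (fun ε : ℝ => ((ε, t₀) : ℝ × ℝ)) (1, 0) 0 :=
      (hasDerivAt_id 0).prodMk (hasDerivAt_const 0 t₀)
    exact hJ₀.trans (hA.comp_hasDerivAt 0 h1).deriv
  have hAapp : ∀ e y : ℝ, A (e, y) = e • J₀ + y • γ' := by
    intro e y
    have h : ((e, y) : ℝ × ℝ) = e • ((1 : ℝ), (0 : ℝ)) + y • ((0 : ℝ), (1 : ℝ)) := by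
      simp [Prod.ext_iff]
    rw [h, map_add, map_smul, map_smul, ← hJA, ← hγA]
  have hσat : ContDiffAt ℝ (⊤ : ℕ∞) σ s₀ := hσ.contDiffAt (hK.mem_nhds hs₀)
  set B := deriv σ s₀ with hBdef
  have hB : HasDerivAt σ B s₀ := (hσat.differentiableAt (by simp)).hasDerivAt
  have hB' : B = u₁ • γ' + u₂ • (‖J₀‖⁻¹ • J₀) := hσ'
  -- the derivative of G at a, as an explicit continuous linear map
  set P21 : (ℝ × (ℝ × ℝ)) →L[ℝ] ℝ :=
    (ContinuousLinearMap.fst ℝ ℝ ℝ).comp (ContinuousLinearMap.snd ℝ ℝ (ℝ × ℝ)) with hP21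
  set M : (ℝ × (ℝ × ℝ)) →L[ℝ] ℝ × ℝ :=
    (ContinuousLinearMap.fst ℝ ℝ (ℝ × ℝ)).prod
      ((ContinuousLinearMap.snd ℝ ℝ ℝ).comp (ContinuousLinearMap.snd ℝ ℝ (ℝ × ℝ))) with hM
  set Bc : ℝ →L[ℝ] ℝ × ℝ := (1 : ℝ →L[ℝ] ℝ).smulRight B with hBc
  set L : (ℝ × (ℝ × ℝ)) →L[ℝ] ℝ × (ℝ × ℝ) :=
    (ContinuousLinearMap.fst ℝ ℝ (ℝ × ℝ)).prod (Bc.comp P21 - A.comp M) with hLdef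
  have hLapp : ∀ p : ℝ × (ℝ × ℝ), L p = (p.1, p.2.1 • B - (p.1 • J₀ + p.2.2 • γ')) := by
    intro p
    simp [hLdef, hBc, hP21, hM, hAapp]
  have hG1 : HasFDerivAt (fun p : ℝ × (ℝ × ℝ) => σ p.2.1) (Bc.comp P21) a :=
    HasFDerivAt.comp a hB.hasFDerivAt P21.hasFDerivAt
  have hG2 : HasFDerivAt (fun p : ℝ × (ℝ × ℝ) => Γ (p.1, p.2.2)) (A.comp M) a :=
    HasFDerivAt.comp a hA M.hasFDerivAt
  have hGL : HasFDerivAt G L a := hasFDerivAt_fst.prodMk (hG1.sub hG2)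
  -- L is bijective
  have hker : ∀ p : ℝ × (ℝ × ℝ), L p = 0 → p = 0 := by
    rintro ⟨e, x, y⟩ hp
    rw [hLapp] at hp
    have he : e = 0 := congrArg Prod.fst hp
    have h2 : x • B - (e • J₀ + y • γ') = 0 := congrArg Prod.snd hp
    rw [he, zero_smul, zero_add, hB'] at h2
    have h3 : (x * u₁ - y) • γ' + (x * (u₂ * ‖J₀‖⁻¹)) • J₀ = 0 := by
      linear_combination (norm := module) h2
    obtain ⟨hc, hd⟩ := hpair _ _ h3
    have hx : x = 0 := by
      have : u₂ * ‖J₀‖⁻¹ ≠ 0 := mul_ne_zero hu₂ (inv_ne_zero hnJ₀)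
      exact (mul_eq_zero.1 hd).resolve_right this
    have hy : y = 0 := by rw [hx, zero_mul, zero_sub, neg_eq_zero] at hc; exact hc
    rw [he, hx, hy]; rfl
  have hLinj : Function.Injective L.toLinearMap := by
    rw [injective_iff_map_eq_zero]
    exact fun p h => hker p h
  have hbij : Function.Bijective L.toLinearMap :=
    ⟨hLinj, LinearMap.injective_iff_surjective.1 hLinj⟩
  set Leq : (ℝ × (ℝ × ℝ)) ≃L[ℝ] ℝ × (ℝ × ℝ) :=
    (LinearEquiv.ofBijective L.toLinearMap hbij).toContinuousLinearEquiv with hLeq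
  have hLeqcoe : (Leq : (ℝ × (ℝ × ℝ)) →L[ℝ] ℝ × (ℝ × ℝ)) = L := by
    ext p <;> rfl
  -- set up the inverse function theorem
  have hGL' : HasFDerivAt G (Leq : (ℝ × (ℝ × ℝ)) →L[ℝ] ℝ × (ℝ × ℝ)) a := by
    rw [hLeqcoe]; exact hGL
  have hstrict : HasStrictFDerivAt G (Leq : (ℝ × (ℝ × ℝ)) →L[ℝ] ℝ × (ℝ × ℝ)) a :=
    hGa.hasStrictFDerivAt' hGL' (by simp)
  set Φ := hstrict.toOpenPartialHomeomorph G with hΦ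
  have hΦcoe : ⇑Φ = G := hstrict.toOpenPartialHomeomorph_coe
  have hasrc : a ∈ Φ.source := hstrict.mem_toOpenPartialHomeomorph_source
  have hatgt : G a ∈ Φ.target := hstrict.image_mem_toOpenPartialHomeomorph_target
  have hGa0 : G a = ((0 : ℝ), ((0 : ℝ), (0 : ℝ))) := by
    show ((0 : ℝ), σ s₀ - Γ (0, t₀)) = _
    rw [hmeet, sub_self]; rfl
  -- smoothness of the inverse on a neighborhood
  have hfc : ContinuousOn (fun q => fderiv ℝ G q) Ω :=
    hGs.continuousOn_fderiv_of_isOpen hΩo (by simp)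
  set W : Set (ℝ × (ℝ × ℝ)) :=
    Ω ∩ (fun q => ContinuousLinearMap.det (fderiv ℝ G q)) ⁻¹' {(0 : ℝ)}ᶜ with hW
  have hWo : IsOpen W :=
    (ContinuousLinearMap.continuous_det.comp_continuousOn hfc).isOpen_inter_preimage hΩo
      isOpen_compl_singleton
  have haW : a ∈ W := by
    refine ⟨haΩ, ?_⟩
    have hfd : fderiv ℝ G a = L := hGL.fderiv
    have hunit : IsUnit (LinearMap.det (L.toLinearMap)) :=
      LinearEquiv.isUnit_det' (LinearEquiv.ofBijective L.toLinearMap hbij)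
    simp only [Set.mem_preimage, Set.mem_compl_iff, Set.mem_singleton_iff, hfd]
    exact hunit.ne_zero
  set N : Set (ℝ × (ℝ × ℝ)) := Φ.target ∩ Φ.symm ⁻¹' (W ∩ Φ.source) with hN
  have hNo : IsOpen N := Φ.isOpen_inter_preimage_symm (hWo.inter Φ.open_source)
  have hsymmGa : Φ.symm (G a) = a := by
    rw [← hΦcoe]; exact Φ.left_inv hasrc
  have hb0N : G a ∈ N := ⟨hatgt, by rw [Set.mem_preimage, hsymmGa]; exact ⟨haW, hasrc⟩⟩
  have hsymm_smooth : ∀ b ∈ N, ContDiffAt ℝ (⊤ : ℕ∞) Φ.symm b := by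
    rintro b ⟨hbt, hbw⟩
    rw [Set.mem_preimage] at hbw
    obtain ⟨⟨hbΩ, hbdet⟩, -⟩ := hbw
    have hbdet' : ContinuousLinearMap.det (fderiv ℝ G (Φ.symm b)) ≠ 0 := hbdet
    have hq : HasFDerivAt G (fderiv ℝ G (Φ.symm b)) (Φ.symm b) :=
      ((hGs.contDiffAt (hΩo.mem_nhds hbΩ)).differentiableAt (by simp)).hasFDerivAt
    refine Φ.contDiffAt_symm hbt
      (f₀' := (fderiv ℝ G (Φ.symm b)).toContinuousLinearEquivOfDetNeZero hbdet') ?_ ?_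
    · rw [hΦcoe]
      simpa using hq
    · rw [hΦcoe]
      exact hGs.contDiffAt (hΩo.mem_nhds hbΩ)
  -- choose the neighborhoods
  obtain ⟨P, Q, hPo, hQo, hP0, hQst, hPQ⟩ :=
    isOpen_prod_iff.1 Φ.open_source 0 (s₀, t₀) hasrc
  obtain ⟨U, V, hUo, hVo, hUs, hVt, hUV⟩ := isOpen_prod_iff.1 hQo s₀ t₀ hQst
  have hcont : Continuous (fun ε : ℝ => ((ε, ((0 : ℝ), (0 : ℝ))) : ℝ × (ℝ × ℝ))) :=
    continuous_id.prodMk continuous_const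
  have hpre : IsOpen ((fun ε : ℝ => ((ε, ((0 : ℝ), (0 : ℝ))) : ℝ × (ℝ × ℝ))) ⁻¹' N ∩ P) :=
    (hNo.preimage hcont).inter hPo
  have h0pre : (0 : ℝ) ∈ (fun ε : ℝ => ((ε, ((0 : ℝ), (0 : ℝ))) : ℝ × (ℝ × ℝ))) ⁻¹' N ∩ P := by
    refine ⟨?_, hP0⟩
    rw [Set.mem_preimage]
    rw [hGa0] at hb0N
    exact hb0N
  obtain ⟨r, hr, hball⟩ := Metric.isOpen_iff.1 hpre 0 h0pre
  have hmem : ∀ ε ∈ Set.Ioo (-r) r,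
      ((ε, ((0 : ℝ), (0 : ℝ))) : ℝ × (ℝ × ℝ)) ∈ N ∧ ε ∈ P := by
    intro ε hε
    have : ε ∈ Metric.ball (0 : ℝ) r := by
      rw [Real.ball_eq_Ioo]
      simpa using hε
    exact hball this
  refine ⟨r, hr, U, V, hUo, hVo, hUs, hVt,
    fun ε => (Φ.symm (ε, ((0 : ℝ), (0 : ℝ)))).2.1,
    fun ε => (Φ.symm (ε, ((0 : ℝ), (0 : ℝ)))).2.2, ?_, ?_, ?_, ?_, ?_, ?_, ?_⟩
  · -- smoothness of s
    intro ε hε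
    have h1 : ContDiffAt ℝ (⊤ : ℕ∞) Φ.symm (ε, ((0 : ℝ), (0 : ℝ))) := hsymm_smooth _ (hmem ε hε).1
    have h2 : ContDiffAt ℝ (⊤ : ℕ∞) (fun ε : ℝ => ((ε, ((0 : ℝ), (0 : ℝ))) : ℝ × (ℝ × ℝ))) ε :=
      (contDiff_id.prodMk contDiff_const).contDiffAt
    exact ((contDiff_fst.contDiffAt.comp ε
      (contDiff_snd.contDiffAt.comp ε (h1.comp ε h2)))).contDiffWithinAt
  · -- smoothness of t
    intro ε hε
    have h1 : ContDiffAt ℝ (⊤ : ℕ∞) Φ.symm (ε, ((0 : ℝ), (0 : ℝ))) := hsymm_smooth _ (hmem ε hε).1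
    have h2 : ContDiffAt ℝ (⊤ : ℕ∞) (fun ε : ℝ => ((ε, ((0 : ℝ), (0 : ℝ))) : ℝ × (ℝ × ℝ))) ε :=
      (contDiff_id.prodMk contDiff_const).contDiffAt
    exact ((contDiff_snd.contDiffAt.comp ε
      (contDiff_snd.contDiffAt.comp ε (h1.comp ε h2)))).contDiffWithinAt
  · -- s 0 = s₀
    have h := hsymmGa
    rw [hGa0] at h
    show (Φ.symm ((0 : ℝ), ((0 : ℝ), (0 : ℝ)))).2.1 = s₀
    rw [h]
  · -- t 0 = t₀
    have h := hsymmGa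
    rw [hGa0] at h
    show (Φ.symm ((0 : ℝ), ((0 : ℝ), (0 : ℝ)))).2.2 = t₀
    rw [h]
  · -- the characterization
    intro ε hε u hu v hv
    constructor
    · intro heq
      have hpsrc : ((ε, (u, v)) : ℝ × (ℝ × ℝ)) ∈ Φ.source :=
        hPQ (Set.mk_mem_prod (hmem ε hε).2 (hUV (Set.mk_mem_prod hu hv)))
      have hGp : G (ε, (u, v)) = (ε, ((0 : ℝ), (0 : ℝ))) := by
        show ((ε, σ u - Γ (ε, v)) : ℝ × (ℝ × ℝ)) = _
        rw [heq, sub_self]; rfl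
      have hkey : Φ.symm (ε, ((0 : ℝ), (0 : ℝ))) = (ε, (u, v)) := by
        rw [← hGp, ← hΦcoe]
        exact Φ.left_inv hpsrc
      constructor
      · show u = (Φ.symm (ε, ((0 : ℝ), (0 : ℝ)))).2.1
        rw [hkey]
      · show v = (Φ.symm (ε, ((0 : ℝ), (0 : ℝ)))).2.2
        rw [hkey]
    · rintro ⟨hu', hv'⟩
      have hGq : G (Φ.symm (ε, ((0 : ℝ), (0 : ℝ)))) = (ε, ((0 : ℝ), (0 : ℝ))) := by
        rw [← hΦcoe]
        exact Φ.right_inv (hmem ε hε).1.1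
      have hq1 : (Φ.symm (ε, ((0 : ℝ), (0 : ℝ)))).1 = ε := congrArg Prod.fst hGq
      have h2 : σ (Φ.symm (ε, ((0 : ℝ), (0 : ℝ)))).2.1 -
          Γ ((Φ.symm (ε, ((0 : ℝ), (0 : ℝ)))).1, (Φ.symm (ε, ((0 : ℝ), (0 : ℝ)))).2.2) = 0 :=
        congrArg Prod.snd hGq
      have h3 := sub_eq_zero.1 h2
      rw [hq1] at h3
      rw [hu', hv']
      exact h3
  · -- deriv s 0
    have hinv : HasStrictFDerivAt Φ.symm
        ((Leq.symm : (ℝ × (ℝ × ℝ)) →L[ℝ] ℝ × (ℝ × ℝ))) (G a) := hstrict.to_localInverse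
    rw [hGa0] at hinv
    have hi : HasDerivAt (fun ε : ℝ => ((ε, ((0 : ℝ), (0 : ℝ))) : ℝ × (ℝ × ℝ)))
        (1, ((0 : ℝ), (0 : ℝ))) 0 := (hasDerivAt_id 0).prodMk (hasDerivAt_const 0 _)
    have hcurve0 : HasDerivAt (fun ε : ℝ => Φ.symm (ε, ((0 : ℝ), (0 : ℝ))))
        (Leq.symm (1, ((0 : ℝ), (0 : ℝ)))) 0 := by
        have := hinv.hasFDerivAt.comp_hasDerivAt 0 hi; exact this
    have hw : Leq.symm ((1 : ℝ), ((0 : ℝ), (0 : ℝ))) = (1, (‖J₀‖ / u₂, ‖J₀‖ * u₁ / u₂)) := by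
      rw [ContinuousLinearEquiv.symm_apply_eq]
      have hLx : Leq (1, (‖J₀‖ / u₂, ‖J₀‖ * u₁ / u₂)) = L (1, (‖J₀‖ / u₂, ‖J₀‖ * u₁ / u₂)) := by
        rw [← hLeqcoe]; rfl
      rw [hLx, hLapp, hB']
      refine Prod.ext rfl ?_
      show (0 : ℝ × ℝ) =
        (‖J₀‖ / u₂) • (u₁ • γ' + u₂ • (‖J₀‖⁻¹ • J₀)) - ((1 : ℝ) • J₀ + (‖J₀‖ * u₁ / u₂) • γ')
      match_scalars <;> field_simp <;> ring
    have hs' : HasDerivAt (fun ε : ℝ => (Φ.symm (ε, ((0 : ℝ), (0 : ℝ)))).2.1) (‖J₀‖ / u₂) 0 := by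
      have h := P21.hasFDerivAt.comp_hasDerivAt 0 hcurve0
      rw [hw] at h
      exact h
    exact hs'.deriv
  · -- deriv t 0
    have hinv : HasStrictFDerivAt Φ.symm
        ((Leq.symm : (ℝ × (ℝ × ℝ)) →L[ℝ] ℝ × (ℝ × ℝ))) (G a) := hstrict.to_localInverse
    rw [hGa0] at hinv
    have hi : HasDerivAt (fun ε : ℝ => ((ε, ((0 : ℝ), (0 : ℝ))) : ℝ × (ℝ × ℝ)))
        (1, ((0 : ℝ), (0 : ℝ))) 0 := (hasDerivAt_id 0).prodMk (hasDerivAt_const 0 _)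
    have hcurve0 : HasDerivAt (fun ε : ℝ => Φ.symm (ε, ((0 : ℝ), (0 : ℝ))))
        (Leq.symm (1, ((0 : ℝ), (0 : ℝ)))) 0 := by
        have := hinv.hasFDerivAt.comp_hasDerivAt 0 hi; exact this
    have hw : Leq.symm ((1 : ℝ), ((0 : ℝ), (0 : ℝ))) = (1, (‖J₀‖ / u₂, ‖J₀‖ * u₁ / u₂)) := by
      rw [ContinuousLinearEquiv.symm_apply_eq]
      have hLx : Leq (1, (‖J₀‖ / u₂, ‖J₀‖ * u₁ / u₂)) = L (1, (‖J₀‖ / u₂, ‖J₀‖ * u₁ / u₂)) := by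
        rw [← hLeqcoe]; rfl
      rw [hLx, hLapp, hB']
      refine Prod.ext rfl ?_
      show (0 : ℝ × ℝ) =
        (‖J₀‖ / u₂) • (u₁ • γ' + u₂ • (‖J₀‖⁻¹ • J₀)) - ((1 : ℝ) • J₀ + (‖J₀‖ * u₁ / u₂) • γ')
      match_scalars <;> field_simp <;> ring
    set P22 : (ℝ × (ℝ × ℝ)) →L[ℝ] ℝ :=
      (ContinuousLinearMap.snd ℝ ℝ ℝ).comp (ContinuousLinearMap.snd ℝ ℝ (ℝ × ℝ)) with hP22
    have ht' : HasDerivAt (fun ε : ℝ => (Φ.symm (ε, ((0 : ℝ), (0 : ℝ)))).2.2)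
        (‖J₀‖ * u₁ / u₂) 0 := by
      have h := P22.hasFDerivAt.comp_hasDerivAt 0 hcurve0
      rw [hw] at h
      exact h
    exact ht'.deriv
end

section
/- Let σ : [0,1] → ℝ² and γ : [a,b] → ℝ² be C^∞ curves such that for every (s,t) ∈ [0,1] × [a,b] with σ(s) = γ(t), the vectors σ'(s) and γ'(t) are linearly independent. Then the set {(s,t) ∈ [0,1] × [a,b] : σ(s) = γ(t)} is finite. -/
open Filter Asymptotics Topology

lemma key_aux {σ γ : ℝ → ℝ × ℝ} {A B : Set ℝ} {s₀ t₀ : ℝ} {v w : ℝ × ℝ}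
    (hv : HasDerivWithinAt σ v A s₀) (hw : HasDerivWithinAt γ w B t₀)
    (u : ℕ → ℝ × ℝ) (huA : ∀ n, (u n).1 ∈ A) (huB : ∀ n, (u n).2 ∈ B)
    (huS : ∀ n, σ (u n).1 = γ (u n).2) (hne : ∀ n, u n ≠ (s₀, t₀))
    (hlim : Tendsto u atTop (𝓝 (s₀, t₀))) (heq : σ s₀ = γ t₀) :
    ¬ LinearIndependent ℝ ![v, w] := by
  set r : ℕ → ℝ := fun n => |(u n).1 - s₀| + |(u n).2 - t₀| with hr_def
  have hr : ∀ n, 0 < r n := by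
    intro n
    rcases (lt_or_eq_of_le (by positivity : (0:ℝ) ≤ r n)) with h | h
    · exact h
    · exfalso
      apply hne n
      have h' : |(u n).1 - s₀| + |(u n).2 - t₀| = 0 := h.symm
      have a1 : |(u n).1 - s₀| = 0 :=
        le_antisymm (by linarith [abs_nonneg ((u n).2 - t₀)]) (abs_nonneg _)
      have a2 : |(u n).2 - t₀| = 0 :=
        le_antisymm (by linarith [abs_nonneg ((u n).1 - s₀)]) (abs_nonneg _)
      have := abs_eq_zero.mp a1
      have := abs_eq_zero.mp a2
      ext <;> simp <;> linarith
  have ht1 : Tendsto (fun n => (u n).1) atTop (𝓝[A] s₀) := by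
    rw [tendsto_nhdsWithin_iff]
    exact ⟨(continuous_fst.tendsto _).comp hlim, Eventually.of_forall huA⟩
  have ht2 : Tendsto (fun n => (u n).2) atTop (𝓝[B] t₀) := by
    rw [tendsto_nhdsWithin_iff]
    exact ⟨(continuous_snd.tendsto _).comp hlim, Eventually.of_forall huB⟩
  have E1 : (fun n => σ (u n).1 - σ s₀ - ((u n).1 - s₀) • v) =o[atTop] fun n => (u n).1 - s₀ :=
    (hasDerivWithinAt_iff_isLittleO.mp hv).comp_tendsto ht1
  have E2 : (fun n => γ (u n).2 - γ t₀ - ((u n).2 - t₀) • w) =o[atTop] fun n => (u n).2 - t₀ :=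
    (hasDerivWithinAt_iff_isLittleO.mp hw).comp_tendsto ht2
  have hO1 : (fun n => (u n).1 - s₀) =O[atTop] r := by
    apply isBigO_of_le
    intro n
    rw [Real.norm_eq_abs, Real.norm_eq_abs, abs_of_pos (hr n)]
    have := abs_nonneg ((u n).2 - t₀); simp only [hr_def]; linarith [abs_nonneg ((u n).1 - s₀)]
  have hO2 : (fun n => (u n).2 - t₀) =O[atTop] r := by
    apply isBigO_of_le
    intro n
    rw [Real.norm_eq_abs, Real.norm_eq_abs, abs_of_pos (hr n)]
    simp only [hr_def]; linarith [abs_nonneg ((u n).1 - s₀)]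
  have hD : (fun n => ((u n).1 - s₀) • v - ((u n).2 - t₀) • w) =o[atTop] r := by
    have := ((E2.trans_isBigO hO2).sub (E1.trans_isBigO hO1))
    apply this.congr' _ (EventuallyEq.rfl)
    apply Eventually.of_forall
    intro n
    have h1 := huS n
    have : γ (u n).2 - γ t₀ = σ (u n).1 - σ s₀ := by rw [h1, heq]
    simp only [this]
    abel
  have hq : Tendsto (fun n => (r n)⁻¹ • (((u n).1 - s₀) • v - ((u n).2 - t₀) • w)) atTop (𝓝 0) :=
    hD.tendsto_inv_smul_nhds_zero
  set p : ℕ → ℝ × ℝ := fun n => (((u n).1 - s₀) / r n, ((u n).2 - t₀) / r n) with hp_def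
  have hpC : ∀ n, p n ∈ Set.Icc (-1:ℝ) 1 ×ˢ Set.Icc (-1:ℝ) 1 := by
    intro n
    have h1 : |(u n).1 - s₀| ≤ r n := by simp only [hr_def]; linarith [abs_nonneg ((u n).2 - t₀)]
    have h2 : |(u n).2 - t₀| ≤ r n := by simp only [hr_def]; linarith [abs_nonneg ((u n).1 - s₀)]
    constructor
    · rw [Set.mem_Icc]
      constructor
      · rw [le_div_iff₀ (hr n)]; cases abs_le.mp h1; linarith
      · rw [div_le_iff₀ (hr n)]; cases abs_le.mp h1; linarith
    · rw [Set.mem_Icc]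
      constructor
      · rw [le_div_iff₀ (hr n)]; cases abs_le.mp h2; linarith
      · rw [div_le_iff₀ (hr n)]; cases abs_le.mp h2; linarith
  obtain ⟨c, _, ψ, hψ, hconv⟩ :=
    ((isCompact_Icc.prod isCompact_Icc)).tendsto_subseq hpC
  intro hli
  have hcont : Continuous (fun z : ℝ × ℝ => z.1 • v - z.2 • w) :=
    (continuous_fst.smul continuous_const).sub (continuous_snd.smul continuous_const)
  have h0 : c.1 • v - c.2 • w = 0 := by
    have hA : Tendsto (fun n => (p (ψ n)).1 • v - (p (ψ n)).2 • w) atTop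
        (𝓝 (c.1 • v - c.2 • w)) := (hcont.tendsto c).comp hconv
    have hB : Tendsto (fun n => (p (ψ n)).1 • v - (p (ψ n)).2 • w) atTop (𝓝 0) := by
      have := hq.comp hψ.tendsto_atTop
      apply this.congr
      intro n
      show (r (ψ n))⁻¹ • (((u (ψ n)).1 - s₀) • v - ((u (ψ n)).2 - t₀) • w) = _
      simp only [hp_def]
      rw [div_eq_inv_mul, div_eq_inv_mul, smul_sub, smul_smul, smul_smul]
    exact tendsto_nhds_unique hA hB
  have h1 : |c.1| + |c.2| = 1 := by
    have hcont2 : Continuous (fun z : ℝ × ℝ => |z.1| + |z.2|) :=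
      continuous_fst.abs.add continuous_snd.abs
    have hA : Tendsto (fun n => |(p (ψ n)).1| + |(p (ψ n)).2|) atTop (𝓝 (|c.1| + |c.2|)) :=
      (hcont2.tendsto c).comp hconv
    have hB : ∀ n, |(p (ψ n)).1| + |(p (ψ n)).2| = 1 := by
      intro n
      simp only [hp_def, abs_div, abs_of_pos (hr (ψ n))]
      rw [← add_div, div_eq_one_iff_eq (hr (ψ n)).ne']
    have : Tendsto (fun _ : ℕ => (1:ℝ)) atTop (𝓝 (|c.1| + |c.2|)) := by
      apply hA.congr; intro n; rw [hB n]
    exact tendsto_nhds_unique this tendsto_const_nhds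
  have := (LinearIndependent.pair_iff.mp hli) c.1 (-c.2) (by rw [neg_smul, ← sub_eq_add_neg]; exact h0)
  rw [this.1, neg_eq_zero.mp this.2] at h1
  simp at h1

/-- If σ : [0,1] → ℝ² and γ : [a,b] → ℝ² are C^∞ curves such that at every
common point σ(s) = γ(t) the tangent vectors σ'(s), γ'(t) are linearly independent, then
the set of parameter pairs (s,t) with σ(s) = γ(t) is finite. -/
theorem stmt_11 (a b : ℝ) (hab : a ≤ b) (σ γ : ℝ → ℝ × ℝ)
    (hσ : ContDiffOn ℝ (⊤ : ℕ∞) σ (Set.Icc 0 1)) (hγ : ContDiffOn ℝ (⊤ : ℕ∞) γ (Set.Icc a b))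
    (hindep : ∀ s ∈ Set.Icc (0 : ℝ) 1, ∀ t ∈ Set.Icc a b, σ s = γ t →
      LinearIndependent ℝ
        ![derivWithin σ (Set.Icc 0 1) s, derivWithin γ (Set.Icc a b) t]) :
    {p : ℝ × ℝ | p.1 ∈ Set.Icc (0 : ℝ) 1 ∧ p.2 ∈ Set.Icc a b ∧ σ p.1 = γ p.2}.Finite := by
  set S := {p : ℝ × ℝ | p.1 ∈ Set.Icc (0 : ℝ) 1 ∧ p.2 ∈ Set.Icc a b ∧ σ p.1 = γ p.2}
    with hS_def
  by_contra hfin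
  have hS : S.Infinite := hfin
  set e := hS.natEmbedding with he_def
  set u : ℕ → ℝ × ℝ := fun n => (e n : ℝ × ℝ) with hu_def
  have huS : ∀ n, u n ∈ S := fun n => (e n).2
  have huinj : Function.Injective u := fun m n h => e.injective (Subtype.ext h)
  have huK : ∀ n, u n ∈ Set.Icc (0:ℝ) 1 ×ˢ Set.Icc a b := fun n => ⟨(huS n).1, (huS n).2.1⟩
  obtain ⟨x, hxK, φ, hφ, hconv⟩ := (isCompact_Icc.prod isCompact_Icc).tendsto_subseq huK
  have hScl : IsClosed S := by
    have hSeq : S = (Set.Icc (0:ℝ) 1 ×ˢ Set.Icc a b) ∩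
        (fun p : ℝ × ℝ => σ p.1 - γ p.2) ⁻¹' {0} := by
      ext p
      simp only [hS_def, Set.mem_setOf_eq, Set.mem_inter_iff, Set.mem_prod, Set.mem_preimage,
        Set.mem_singleton_iff, sub_eq_zero, and_assoc]
    rw [hSeq]
    apply ContinuousOn.preimage_isClosed_of_isClosed _ (isClosed_Icc.prod isClosed_Icc)
      isClosed_singleton
    apply ContinuousOn.sub
    · exact hσ.continuousOn.comp continuous_fst.continuousOn (fun p hp => hp.1)
    · exact hγ.continuousOn.comp continuous_snd.continuousOn (fun p hp => hp.2)
  have hxS : x ∈ S := hScl.mem_of_tendsto hconv (Eventually.of_forall fun n => huS (φ n))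
  have hfin2 : {n : ℕ | u (φ n) = x}.Finite := by
    apply Set.Subsingleton.finite
    intro m hm n hn
    exact hφ.injective (huinj (hm.trans hn.symm))
  have hev : ∀ᶠ n in atTop, u (φ n) ≠ x := by
    rw [← Nat.cofinite_eq_atTop]
    exact hfin2.compl_mem_cofinite
  obtain ⟨N, hN⟩ := eventually_atTop.mp hev
  set u' : ℕ → ℝ × ℝ := fun n => u (φ (n + N)) with hu'_def
  have hv : HasDerivWithinAt σ (derivWithin σ (Set.Icc 0 1) x.1) (Set.Icc 0 1) x.1 :=
    ((hσ.differentiableOn (by simp)) x.1 hxS.1).hasDerivWithinAt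
  have hw : HasDerivWithinAt γ (derivWithin γ (Set.Icc a b) x.2) (Set.Icc a b) x.2 :=
    ((hγ.differentiableOn (by simp)) x.2 hxS.2.1).hasDerivWithinAt
  have hlim' : Tendsto u' atTop (𝓝 (x.1, x.2)) := by
    rw [Prod.mk.eta]
    exact hconv.comp (tendsto_add_atTop_nat N)
  exact key_aux hv hw u' (fun n => (huS _).1) (fun n => (huS _).2.1)
    (fun n => (huS _).2.2) (fun n => by rw [Prod.mk.eta]; exact hN (n + N) (Nat.le_add_left N n))
    hlim' hxS.2.2 (hindep x.1 hxS.1 x.2 hxS.2.1 hxS.2.2)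
end

section
/- Define t⁺(θ, ε) = sin θ + √(sin²θ + ε cos θ − ε²) on the set of (θ, ε) where sin²θ + ε cos θ − ε² ≥ 0. Then for every θ ∈ (0, π/2), the function ε ↦ t⁺(θ, ε) is differentiable at ε = 0 with ∂_ε t⁺(θ, 0) = 1/(2 tan θ); moreover ∂_ε t⁺(θ, 0) → +∞ as θ → 0⁺, so the partial derivative ∂_ε t⁺(·, 0) is unbounded on every interval (0, θ₀) and t⁺ admits no C¹ extension to any neighborhood of (0,0) in ℝ². -/
open Real Filter Set Topology

/-!
At `θ ∈ (0, π/2)` the radicand equals `sin² θ > 0` at `ε = 0`, so the chain rule gives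
`∂_ε t⁺(θ, 0) = cos θ / (2 sin θ) = 1 / (2 tan θ)`, which blows up as `θ → 0⁺`.
At `θ = 0` the radicand `ε - ε²` vanishes at `ε = 0`, and the difference quotients
`√(ε - ε²) / ε = √(ε⁻¹ - 1)` tend to `+∞`; but a `C¹` extension `g` would make `ε ↦ g (0, ε)`
differentiable at `0`, with these same difference quotients from the right.
-/

lemma hasDerivAt_add_sqrt_sq_add_mul_sub_sq {s : ℝ} (hs : 0 < s) (c : ℝ) :
    HasDerivAt (fun ε : ℝ => s + √(s ^ 2 + ε * c - ε ^ 2)) (c / (2 * s)) 0 := by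
  have hradicand : HasDerivAt (fun ε : ℝ => s ^ 2 + ε * c - ε ^ 2) c 0 := by
    refine ((((hasDerivAt_id (0 : ℝ)).mul_const c).const_add (s ^ 2)).sub
      (hasDerivAt_pow 2 (0 : ℝ))).congr_deriv ?_
    simp
  have hpos : s ^ 2 + 0 * c - 0 ^ 2 ≠ 0 := by simp [hs.ne']
  refine (((hasDerivAt_sqrt hpos).comp 0 hradicand).const_add s).congr_deriv ?_
  simp only [zero_mul, add_zero, ne_eq, OfNat.ofNat_ne_zero, not_false_eq_true, zero_pow, sub_zero,
    sqrt_sq hs.le]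
  ring

lemma tendsto_tan_nhdsGT_zero : Tendsto tan (𝓝[>] 0) (𝓝[>] 0) := by
  apply tendsto_nhdsWithin_of_tendsto_nhds_of_eventually_within
  · simpa using (continuousAt_tan.2 (by simp)).tendsto.mono_left (nhdsWithin_le_nhds (a := 0))
  · filter_upwards [Ioo_mem_nhdsGT pi_div_two_pos] with θ hθ
    exact tan_pos_of_pos_of_lt_pi_div_two hθ.1 hθ.2

lemma tendsto_one_div_two_mul_tan_nhdsGT_zero :
    Tendsto (fun θ : ℝ => 1 / (2 * tan θ)) (𝓝[>] 0) atTop := by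
  have h := tendsto_tan_nhdsGT_zero.inv_tendsto_nhdsGT_zero.const_mul_atTop (one_half_pos (α := ℝ))
  exact h.congr fun θ => by simp only [Pi.inv_apply]; ring

lemma Filter.Tendsto.not_bddAbove_image {α β : Type*} [Preorder β] [NoMaxOrder β]
    {l : Filter α} [l.NeBot] {f : α → β} (hf : Tendsto f l atTop) {s : Set α} (hs : s ∈ l) :
    ¬ BddAbove (f '' s) := by
  rintro ⟨M, hM⟩
  obtain ⟨x, hMx, hx⟩ := ((hf.eventually_gt_atTop M).and hs).exists
  exact (hM (mem_image_of_mem f hx)).not_gt hMx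

lemma not_differentiableWithinAt_Ici_of_tendsto_slope_atTop {f : ℝ → ℝ} {a : ℝ}
    (hf : Tendsto (slope f a) (𝓝[>] a) atTop) : ¬ DifferentiableWithinAt ℝ f (Ici a) a := by
  intro hd
  have hslope := (hasDerivWithinAt_iff_tendsto_slope' (lt_irrefl a)).1
    hd.hasDerivWithinAt.Ioi_of_Ici
  exact not_tendsto_nhds_of_tendsto_atTop hf _ hslope

lemma tendsto_slope_sqrt_sub_sq_zero :
    Tendsto (slope (fun ε : ℝ => √(ε - ε ^ 2)) 0) (𝓝[>] 0) atTop := by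
  have hlim : Tendsto (fun ε : ℝ => √(ε⁻¹ - 1)) (𝓝[>] 0) atTop :=
    tendsto_sqrt_atTop.comp (tendsto_atTop_add_const_right _ (-1) tendsto_inv_nhdsGT_zero)
  refine hlim.congr' ?_
  filter_upwards [self_mem_nhdsWithin] with ε (hε : 0 < ε)
  rw [slope_def_field]
  simp only [sub_zero, ne_eq, OfNat.ofNat_ne_zero, not_false_eq_true, zero_pow, sqrt_zero]
  rw [← sqrt_sq hε.le, ← sqrt_div' _ (sq_nonneg ε), sqrt_sq hε.le]
  congr 1
  field_simp

/-- For t⁺(θ,ε) = sin θ + √(sin²θ + ε cos θ − ε²), for every θ ∈ (0, π/2)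
the map ε ↦ t⁺(θ,ε) is differentiable at 0 with derivative 1/(2 tan θ); this derivative
tends to +∞ as θ → 0⁺, is unbounded on every interval (0, θ₀), and t⁺ admits no C¹
extension to any neighborhood of (0,0). -/
theorem stmt_13 :
    (∀ θ : ℝ, θ ∈ Set.Ioo 0 (π / 2) →
      HasDerivAt (fun ε : ℝ => sin θ + Real.sqrt (sin θ ^ 2 + ε * cos θ - ε ^ 2))
        (1 / (2 * tan θ)) 0) ∧
    Tendsto (fun θ : ℝ => 1 / (2 * tan θ)) (nhdsWithin 0 (Set.Ioi 0)) atTop ∧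
    (∀ θ₀ : ℝ, 0 < θ₀ → ¬ BddAbove ((fun θ : ℝ => 1 / (2 * tan θ)) '' Set.Ioo 0 θ₀)) ∧
    ¬ ∃ (U : Set (ℝ × ℝ)) (g : ℝ × ℝ → ℝ), IsOpen U ∧ ((0 : ℝ), (0 : ℝ)) ∈ U ∧
      ContDiffOn ℝ 1 g U ∧
      ∀ p ∈ U, 0 ≤ sin p.1 ^ 2 + p.2 * cos p.1 - p.2 ^ 2 →
        g p = sin p.1 + Real.sqrt (sin p.1 ^ 2 + p.2 * cos p.1 - p.2 ^ 2) := by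
  refine ⟨fun θ hθ => ?_, tendsto_one_div_two_mul_tan_nhdsGT_zero,
    fun θ₀ hθ₀ => tendsto_one_div_two_mul_tan_nhdsGT_zero.not_bddAbove_image
      (Ioo_mem_nhdsGT hθ₀), ?_⟩
  · have hsin : 0 < sin θ := sin_pos_of_pos_of_lt_pi hθ.1 (by linarith [hθ.2, pi_pos])
    refine (hasDerivAt_add_sqrt_sq_add_mul_sub_sq hsin _).congr_deriv ?_
    rw [tan_eq_sin_div_cos]
    field_simp
  rintro ⟨U, g, hU, h0U, hg, hgU⟩
  have hvertical : Continuous fun ε : ℝ => ((0 : ℝ), ε) := by fun_prop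
  have hdiff : DifferentiableAt ℝ (fun ε : ℝ => g (0, ε)) 0 :=
    ((hg.differentiableOn one_ne_zero).differentiableAt (hU.mem_nhds h0U)).comp 0
      (by fun_prop)
  have hslice : (fun ε : ℝ => √(ε - ε ^ 2)) =ᶠ[𝓝[Ici 0] 0] fun ε => g (0, ε) := by
    filter_upwards [nhdsWithin_le_nhds ((hU.preimage hvertical).mem_nhds h0U),
      nhdsWithin_le_nhds (Iio_mem_nhds one_pos), self_mem_nhdsWithin]
      with ε (hεU : ((0 : ℝ), ε) ∈ U) (hε1 : ε < 1) (hε0 : 0 ≤ ε)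
    simpa using (hgU _ hεU (by simp only [sin_zero, cos_zero]; nlinarith)).symm
  exact not_differentiableWithinAt_Ici_of_tendsto_slope_atTop tendsto_slope_sqrt_sub_sq_zero
    (hdiff.differentiableWithinAt.congr_of_eventuallyEq hslice
      (hslice.eq_of_nhdsWithin self_mem_Ici))
end
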